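/- arXiv:1909.10465 — 7 statements merged into one kernel-verified Lean document; each statement's English description precedes it below -/
import Mathlib

section
/- Kelley's Theorem. An algebra 𝒜 of subsets of a nonempty set Ω admits a strictly positive finitely additive probability if and only if 𝒜 can be written as 𝒜 = {∅} ∪ ⋃_{n∈ℕ} 𝓑ₙ where each 𝓑ₙ ⊆ 𝒜₊ has intersection number I(𝓑ₙ) > 0. -/
/-- An algebra of subsets of `Ω`: contains `∅` and `univ`, closed under
complements and finite unions. -/
def IsSetAlgebra {Ω : Type*} (𝒜 : Set (Set Ω)) : Prop :=
  ∅ ∈ 𝒜 ∧ Set.univ ∈ 𝒜 ∧ (∀ A ∈ 𝒜, Aᶜ ∈ 𝒜) ∧ ∀ A ∈ 𝒜, ∀ B ∈ 𝒜, A ∪ B ∈ 𝒜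

/-- A finitely additive probability on the algebra `𝒜`. -/
def IsFAProb {Ω : Type*} (𝒜 : Set (Set Ω)) (m : Set Ω → ℝ) : Prop :=
  (∀ A ∈ 𝒜, 0 ≤ m A) ∧ m Set.univ = 1 ∧
    ∀ A ∈ 𝒜, ∀ B ∈ 𝒜, Disjoint A B → m (A ∪ B) = m A + m B

/-- `sFun β = (1/|β|) ∑_{B ∈ β} 1_B` for a finite sequence (list) of sets `β`. -/
noncomputable def sFun {Ω : Type*} (β : List (Set Ω)) : Ω → ℝ := fun ω =>
  (β.map fun B => B.indicator (fun _ => (1 : ℝ)) ω).sum / β.length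

/-- Kelley's intersection number of a family `𝓑`:
`I(𝓑) = inf over nonempty finite sequences β from 𝓑 of sup_ω s(β)(ω)`. -/
noncomputable def interNum {Ω : Type*} (𝓑 : Set (Set Ω)) : ℝ :=
  sInf {r | ∃ β : List (Set Ω), β ≠ [] ∧ (∀ B ∈ β, B ∈ 𝓑) ∧ r = ⨆ ω, sFun β ω}

namespace Kelley
variable {Ω : Type*}



noncomputable def cnt (β : List (Set Ω)) (ω : Ω) : ℝ :=
  (β.map fun B => B.indicator (fun _ => (1 : ℝ)) ω).sum

lemma sFun_eq (β : List (Set Ω)) (ω : Ω) : sFun β ω = cnt β ω / β.length := rfl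

lemma cnt_nil (ω : Ω) : cnt ([] : List (Set Ω)) ω = 0 := rfl

lemma cnt_cons (B : Set Ω) (β : List (Set Ω)) (ω : Ω) :
    cnt (B :: β) ω = B.indicator (fun _ => (1 : ℝ)) ω + cnt β ω := by
  simp [cnt]

lemma cnt_append (β₁ β₂ : List (Set Ω)) (ω : Ω) :
    cnt (β₁ ++ β₂) ω = cnt β₁ ω + cnt β₂ ω := by
  simp [cnt]

lemma cnt_nonneg (β : List (Set Ω)) (ω : Ω) : 0 ≤ cnt β ω := by
  induction β with
  | nil => simp [cnt_nil]
  | cons B β ih =>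
    rw [cnt_cons]
    have : (0:ℝ) ≤ B.indicator (fun _ => (1 : ℝ)) ω := Set.indicator_nonneg (by simp) ω
    linarith

lemma cnt_le_length (β : List (Set Ω)) (ω : Ω) : cnt β ω ≤ β.length := by
  induction β with
  | nil => simp [cnt_nil]
  | cons B β ih =>
    rw [cnt_cons]
    have h1 : B.indicator (fun _ => (1 : ℝ)) ω ≤ 1 := Set.indicator_le' (fun _ _ => le_refl _) (fun _ _ => zero_le_one) ω
    simp only [List.length_cons]
    push_cast
    linarith

lemma cnt_cons_of_mem {B : Set Ω} {ω : Ω} (h : ω ∈ B) (β : List (Set Ω)) :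
    cnt (B :: β) ω = 1 + cnt β ω := by
  rw [cnt_cons, Set.indicator_of_mem h]

lemma cnt_cons_of_not_mem {B : Set Ω} {ω : Ω} (h : ω ∉ B) (β : List (Set Ω)) :
    cnt (B :: β) ω = cnt β ω := by
  rw [cnt_cons, Set.indicator_of_notMem h, zero_add]

lemma cnt_join_replicate (k : ℕ) (β : List (Set Ω)) (ω : Ω) :
    cnt ((List.replicate k β).flatten) ω = k * cnt β ω := by
  induction k with
  | zero => simp [cnt_nil]
  | succ k ih => rw [List.replicate_succ, List.flatten_cons, cnt_append, ih]; push_cast; ring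

lemma length_join_replicate (k : ℕ) (β : List (Set Ω)) :
    ((List.replicate k β).flatten).length = k * β.length := by
  induction k with
  | zero => simp
  | succ k ih => rw [List.replicate_succ, List.flatten_cons, List.length_append, ih]; ring

lemma sFun_nonneg (β : List (Set Ω)) (ω : Ω) : 0 ≤ sFun β ω := by
  rw [sFun_eq]
  exact div_nonneg (cnt_nonneg β ω) (Nat.cast_nonneg _)

lemma sFun_le_one (β : List (Set Ω)) (ω : Ω) : sFun β ω ≤ 1 := by
  rw [sFun_eq]
  rcases Nat.eq_zero_or_pos β.length with h | h
  · simp [h]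
  · rw [div_le_one (by exact_mod_cast h)]
    exact cnt_le_length β ω

lemma bddAbove_sFun (β : List (Set Ω)) : BddAbove (Set.range (sFun β)) :=
  ⟨1, by rintro r ⟨ω, rfl⟩; exact sFun_le_one β ω⟩


section AlgebraFacts
variable {𝒜 : Set (Set Ω)} {m : Set Ω → ℝ}

lemma inter_mem (h : IsSetAlgebra 𝒜) {A B : Set Ω} (hA : A ∈ 𝒜) (hB : B ∈ 𝒜) :
    A ∩ B ∈ 𝒜 := by
  have h1 := h.2.2.2 Aᶜ (h.2.2.1 A hA) Bᶜ (h.2.2.1 B hB)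
  have h2 := h.2.2.1 _ h1
  simpa [Set.compl_union] using h2

lemma m_empty (h : IsSetAlgebra 𝒜) (hm : IsFAProb 𝒜 m) : m ∅ = 0 := by
  have := hm.2.2 ∅ h.1 ∅ h.1 (by simp)
  simp at this
  linarith

lemma m_split (h : IsSetAlgebra 𝒜) (hm : IsFAProb 𝒜 m) {X B : Set Ω}
    (hX : X ∈ 𝒜) (hB : B ∈ 𝒜) : m X = m (X ∩ B) + m (X ∩ Bᶜ) := by
  have h1 : X ∩ B ∈ 𝒜 := inter_mem h hX hB
  have h2 : X ∩ Bᶜ ∈ 𝒜 := inter_mem h hX (h.2.2.1 B hB)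
  have hd : Disjoint (X ∩ B) (X ∩ Bᶜ) := by
    apply Set.disjoint_left.2
    rintro ω ⟨-, hωB⟩ ⟨-, hωBc⟩
    exact hωBc hωB
  have hu : (X ∩ B) ∪ (X ∩ Bᶜ) = X := by
    rw [← Set.inter_union_distrib_left, Set.union_compl_self, Set.inter_univ]
  have := hm.2.2 _ h1 _ h2 hd
  rw [hu] at this
  exact this

lemma bdd_cnt (C : Set Ω) (l : List (Set Ω)) :
    BddAbove (Set.range fun ω : C => cnt l ω) := by
  refine ⟨l.length, ?_⟩
  rintro r ⟨ω, rfl⟩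
  exact cnt_le_length l ω

lemma sum_map_add (l : List (Set Ω)) (f g : Set Ω → ℝ) :
    (l.map fun x => f x + g x).sum = (l.map f).sum + (l.map g).sum := by
  induction l with
  | nil => simp
  | cons a l ih => simp [ih]; ring

/-- Key lemma: `∑ m(B ∩ C) ≤ m C * sup_{ω ∈ C} cnt β ω`. -/
lemma key_sum_le (h : IsSetAlgebra 𝒜) (hm : IsFAProb 𝒜 m) :
    ∀ β : List (Set Ω), (∀ B ∈ β, B ∈ 𝒜) → ∀ C ∈ 𝒜,
      (β.map fun B => m (B ∩ C)).sum ≤ m C * ⨆ ω : C, cnt β ω := by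
  intro β
  induction β with
  | nil =>
    intro _ C hC
    simp only [List.map_nil, List.sum_nil]
    apply mul_nonneg (hm.1 C hC)
    rcases isEmpty_or_nonempty C with h'|h'
    · rw [Real.iSup_of_isEmpty]
    · exact le_ciSup_of_le (bdd_cnt C []) h'.some (cnt_nonneg _ _)
  | cons B β ih =>
    intro hβ C hC
    rcases Set.eq_empty_or_nonempty C with rfl | hCne
    · simp [Set.inter_empty, m_empty h hm]
    have hB𝒜 : B ∈ 𝒜 := hβ B (by simp)
    have hβ' : ∀ B' ∈ β, B' ∈ 𝒜 := fun B' hB' => hβ B' (by simp [hB'])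
    set K := ⨆ ω : C, cnt (B :: β) ω with hK
    have hKmem : ∀ ω : C, cnt (B :: β) (ω : Ω) ≤ K := fun ω => le_ciSup (bdd_cnt C (B :: β)) ω
    -- split the sum
    have hsplit : (β.map fun B' => m (B' ∩ C)).sum
        = (β.map fun B' => m (B' ∩ (C ∩ B))).sum + (β.map fun B' => m (B' ∩ (C ∩ Bᶜ))).sum := by
      rw [← sum_map_add]
      apply congrArg
      apply List.map_congr_left
      intro B' hB'
      have := m_split h hm (inter_mem h (hβ' B' hB') hC) hB𝒜
      rw [this, Set.inter_assoc, Set.inter_assoc]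
    have T1 : (β.map fun B' => m (B' ∩ (C ∩ B))).sum ≤ m (C ∩ B) * ⨆ ω : ↥(C ∩ B), cnt β ω :=
      ih hβ' (C ∩ B) (inter_mem h hC hB𝒜)
    have T2 : (β.map fun B' => m (B' ∩ (C ∩ Bᶜ))).sum ≤ m (C ∩ Bᶜ) * ⨆ ω : ↥(C ∩ Bᶜ), cnt β ω :=
      ih hβ' (C ∩ Bᶜ) (inter_mem h hC (h.2.2.1 B hB𝒜))
    have E1 : m (B ∩ C) + m (C ∩ B) * (⨆ ω : ↥(C ∩ B), cnt β ω) ≤ m (C ∩ B) * K := by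
      rcases Set.eq_empty_or_nonempty (C ∩ B) with he | hne
      · have hz : m (C ∩ B) = 0 := by rw [he]; exact m_empty h hm
        have hz2 : m (B ∩ C) = 0 := by rw [Set.inter_comm]; exact hz
        simp [hz, hz2]
      · have : Nonempty ↥(C ∩ B) := hne.to_subtype
        have h1 : (⨆ ω : ↥(C ∩ B), cnt β ω) ≤ K - 1 := by
          apply ciSup_le
          intro ω
          have hωC : (ω : Ω) ∈ C := ω.2.1
          have hωB : (ω : Ω) ∈ B := ω.2.2
          have := hKmem ⟨ω, hωC⟩
          rw [cnt_cons_of_mem hωB] at this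
          linarith
        have h2 : 0 ≤ m (C ∩ B) := hm.1 _ (inter_mem h hC hB𝒜)
        have h3 := mul_le_mul_of_nonneg_left h1 h2
        rw [Set.inter_comm B C]
        nlinarith
    have E2 : m (C ∩ Bᶜ) * (⨆ ω : ↥(C ∩ Bᶜ), cnt β ω) ≤ m (C ∩ Bᶜ) * K := by
      rcases Set.eq_empty_or_nonempty (C ∩ Bᶜ) with he | hne
      · have hz : m (C ∩ Bᶜ) = 0 := by rw [he]; exact m_empty h hm
        simp [hz]
      · have : Nonempty ↥(C ∩ Bᶜ) := hne.to_subtype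
        apply mul_le_mul_of_nonneg_left _ (hm.1 _ (inter_mem h hC (h.2.2.1 B hB𝒜)))
        apply ciSup_le
        intro ω
        have hωC : (ω : Ω) ∈ C := ω.2.1
        have hωB : (ω : Ω) ∉ B := ω.2.2
        have := hKmem ⟨ω, hωC⟩
        rw [cnt_cons_of_not_mem hωB] at this
        exact this
    have hmsplit := m_split h hm hC hB𝒜
    calc ((B :: β).map fun B' => m (B' ∩ C)).sum
        = m (B ∩ C) + (β.map fun B' => m (B' ∩ C)).sum := by simp
      _ = m (B ∩ C) + ((β.map fun B' => m (B' ∩ (C ∩ B))).sum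
            + (β.map fun B' => m (B' ∩ (C ∩ Bᶜ))).sum) := by rw [hsplit]
      _ ≤ m (B ∩ C) + (m (C ∩ B) * (⨆ ω : ↥(C ∩ B), cnt β ω)
            + m (C ∩ Bᶜ) * (⨆ ω : ↥(C ∩ Bᶜ), cnt β ω)) := by linarith
      _ ≤ m (C ∩ B) * K + m (C ∩ Bᶜ) * K := by linarith
      _ = m C * K := by rw [hmsplit]; ring

end AlgebraFacts

section Forward
variable {𝒜 : Set (Set Ω)} {m : Set Ω → ℝ}

lemma le_sum_map (l : List (Set Ω)) (f : Set Ω → ℝ) (c : ℝ) (h : ∀ B ∈ l, c ≤ f B) :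
    c * l.length ≤ (l.map f).sum := by
  induction l with
  | nil => simp
  | cons a l ih =>
    simp only [List.map_cons, List.sum_cons, List.length_cons]
    have h1 := h a (by simp)
    have h2 := ih (fun B hB => h B (by simp [hB]))
    push_cast
    linarith

lemma kelley_forward [Nonempty Ω] (h : IsSetAlgebra 𝒜) (hm : IsFAProb 𝒜 m)
    (hpos : ∀ A ∈ 𝒜, A ≠ ∅ → 0 < m A) :
    ∃ 𝓑 : ℕ → Set (Set Ω), (∀ n, 𝓑 n ⊆ 𝒜 \ {∅}) ∧ (∀ n, 0 < interNum (𝓑 n)) ∧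
        𝒜 = {(∅ : Set Ω)} ∪ ⋃ n, 𝓑 n := by
  refine ⟨fun n => {A | A ∈ 𝒜 ∧ A ≠ ∅ ∧ 1 / (n + 1 : ℝ) ≤ m A}, ?_, ?_, ?_⟩
  · intro n A hA
    exact ⟨hA.1, hA.2.1⟩
  · intro n
    have hc : (0:ℝ) < 1 / (n + 1 : ℝ) := by positivity
    have huniv : Set.univ ∈ {A | A ∈ 𝒜 ∧ A ≠ ∅ ∧ 1 / (n + 1 : ℝ) ≤ m A} := by
      refine ⟨h.2.1, ?_, ?_⟩
      · exact Set.nonempty_iff_ne_empty.1 Set.univ_nonempty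
      · rw [hm.2.1]
        rw [div_le_one (by positivity)]
        have : (0:ℝ) ≤ (n:ℝ) := Nat.cast_nonneg n
        linarith
    have hlow : ∀ r ∈ {r | ∃ β : List (Set Ω), β ≠ [] ∧
        (∀ B ∈ β, B ∈ {A | A ∈ 𝒜 ∧ A ≠ ∅ ∧ 1 / (n + 1 : ℝ) ≤ m A}) ∧ r = ⨆ ω, sFun β ω},
        1 / (n + 1 : ℝ) ≤ r := by
      rintro r ⟨β, hβne, hβ, rfl⟩
      have hL : 0 < (β.length : ℝ) := by
        have := List.length_pos_iff.2 hβne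
        exact_mod_cast this
      have hkey := key_sum_le h hm β (fun B hB => (hβ B hB).1) Set.univ h.2.1
      simp only [Set.inter_univ, hm.2.1, one_mul] at hkey
      have h1 : 1 / (n + 1 : ℝ) * β.length ≤ (β.map m).sum :=
        le_sum_map β m _ (fun B hB => (hβ B hB).2.2)
      have h2 : (⨆ ω : (Set.univ : Set Ω), cnt β ω) ≤ β.length * ⨆ ω, sFun β ω := by
        have : Nonempty (Set.univ : Set Ω) := ⟨⟨Classical.arbitrary Ω, trivial⟩⟩
        apply ciSup_le
        intro ω
        have hc1 : cnt β (ω : Ω) = β.length * sFun β (ω : Ω) := by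
          rw [sFun_eq, mul_div_cancel₀]
          exact ne_of_gt hL
        rw [hc1]
        exact mul_le_mul_of_nonneg_left (le_ciSup (bddAbove_sFun β) (ω : Ω)) (le_of_lt hL)
      have h3 : 1 / (n + 1 : ℝ) * β.length ≤ β.length * ⨆ ω, sFun β ω := by linarith
      calc 1 / (n + 1 : ℝ) = (1 / (n + 1 : ℝ) * β.length) / β.length := by
            field_simp
        _ ≤ (β.length * ⨆ ω, sFun β ω) / β.length := by
            gcongr
        _ = ⨆ ω, sFun β ω := by field_simp
    have : 1 / (n + 1 : ℝ) ≤ interNum {A | A ∈ 𝒜 ∧ A ≠ ∅ ∧ 1 / (n + 1 : ℝ) ≤ m A} := by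
      apply le_csInf
      · exact ⟨⨆ ω, sFun [Set.univ] ω, [Set.univ], by simp, by simpa using huniv, rfl⟩
      · exact hlow
    linarith
  · apply Set.Subset.antisymm
    · intro A hA
      rcases eq_or_ne A ∅ with rfl | hne
      · exact Or.inl rfl
      · right
        have hmA := hpos A hA hne
        obtain ⟨n, hn⟩ := exists_nat_ge (1 / m A)
        refine Set.mem_iUnion.2 ⟨n, hA, hne, ?_⟩
        rw [div_le_iff₀ (by positivity)]
        have h1 : 1 / m A * m A ≤ (n:ℝ) * m A := mul_le_mul_of_nonneg_right hn (le_of_lt hmA)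
        rw [one_div_mul_cancel (ne_of_gt hmA)] at h1
        nlinarith
    · rintro A (rfl | hA)
      · exact h.1
      · obtain ⟨n, hn⟩ := Set.mem_iUnion.1 hA
        exact hn.1

end Forward

section Reverse
variable [Nonempty Ω] {𝒜 𝓑 : Set (Set Ω)}

lemma le_add_eps {a b : ℝ} (h : ∀ ε : ℝ, 0 < ε → a ≤ b + ε) : a ≤ b := by
  by_contra hc
  push_neg at hc
  linarith [h ((a - b) / 2) (by linarith)]

noncomputable def ind (A : Set Ω) : Ω → ℝ := A.indicator fun _ => 1

lemma ind_nonneg (A : Set Ω) (ω : Ω) : 0 ≤ ind A ω := Set.indicator_nonneg (by simp) ω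

lemma ind_le_one (A : Set Ω) (ω : Ω) : ind A ω ≤ 1 :=
  Set.indicator_le' (fun _ _ => le_refl _) (fun _ _ => zero_le_one) ω

lemma abs_ind_le (A : Set Ω) (ω : Ω) : |ind A ω| ≤ 1 :=
  abs_le.2 ⟨by linarith [ind_nonneg A ω], ind_le_one A ω⟩

def indSet (𝒜 : Set (Set Ω)) : Set (Ω → ℝ) := (fun A => ind A) '' 𝒜

lemma span_bounded {f : Ω → ℝ} (hf : f ∈ Submodule.span ℝ (indSet 𝒜)) :
    ∃ M : ℝ, 0 ≤ M ∧ ∀ ω, |f ω| ≤ M := by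
  induction hf using Submodule.span_induction with
  | mem x hx =>
    obtain ⟨A, -, rfl⟩ := hx
    exact ⟨1, zero_le_one, abs_ind_le A⟩
  | zero => exact ⟨0, le_refl _, by simp⟩
  | add x y hx hy ihx ihy =>
    obtain ⟨M1, hM1, h1⟩ := ihx
    obtain ⟨M2, hM2, h2⟩ := ihy
    exact ⟨M1 + M2, by linarith, fun ω => by
      have := abs_add_le (x ω) (y ω)
      have := h1 ω; have := h2 ω
      simp only [Pi.add_apply]
      linarith⟩
  | smul a x hx ihx =>
    obtain ⟨M, hM, h1⟩ := ihx
    exact ⟨|a| * M, by positivity, fun ω => by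
      simp only [Pi.smul_apply, smul_eq_mul, abs_mul]
      exact mul_le_mul_of_nonneg_left (h1 ω) (abs_nonneg a)⟩

lemma interNum_bddBelow (𝓑 : Set (Set Ω)) :
    ∀ r ∈ {r | ∃ β : List (Set Ω), β ≠ [] ∧ (∀ B ∈ β, B ∈ 𝓑) ∧ r = ⨆ ω, sFun β ω}, 0 ≤ r := by
  rintro r ⟨β, hne, hβ, rfl⟩
  exact le_ciSup_of_le (bddAbove_sFun β) (Classical.arbitrary Ω) (sFun_nonneg β _)

lemma interNum_le {β : List (Set Ω)} (hne : β ≠ []) (hβ : ∀ B ∈ β, B ∈ 𝓑) :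
    interNum 𝓑 ≤ ⨆ ω, sFun β ω :=
  csInf_le ⟨0, fun r hr => interNum_bddBelow 𝓑 r hr⟩ ⟨β, hne, hβ, rfl⟩

lemma interNum_nonneg (𝓑 : Set (Set Ω)) : 0 ≤ interNum 𝓑 :=
  Real.sInf_nonneg (interNum_bddBelow 𝓑)

lemma exists_mem_of_interNum_pos (hI : 0 < interNum 𝓑) : ∃ B, B ∈ 𝓑 := by
  by_contra hc
  push_neg at hc
  have he : {r | ∃ β : List (Set Ω), β ≠ [] ∧ (∀ B ∈ β, B ∈ 𝓑) ∧ r = ⨆ ω, sFun β ω} = ∅ := by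
    apply Set.eq_empty_iff_forall_notMem.2
    rintro r ⟨β, hne, hβ, rfl⟩
    cases β with
    | nil => exact hne rfl
    | cons B β => exact hc B (hβ B (by simp))
  rw [interNum, he, Real.sInf_empty] at hI
  exact lt_irrefl 0 hI

/-- The sublinear functional's defining set. -/
noncomputable def QS (𝓑 : Set (Set Ω)) (f : Ω → ℝ) : Set ℝ :=
  {r | ∃ lam : ℝ, 0 ≤ lam ∧ ∃ β : List (Set Ω), β ≠ [] ∧ (∀ B ∈ β, B ∈ 𝓑) ∧
    r = (⨆ ω, (f ω + lam * sFun β ω)) - lam * interNum 𝓑}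

noncomputable def qf (𝓑 : Set (Set Ω)) (f : Ω → ℝ) : ℝ := sInf (QS 𝓑 f)

lemma bdd_fs {f : Ω → ℝ} {M : ℝ} (hfM : ∀ ω, |f ω| ≤ M) {lam : ℝ} (hlam : 0 ≤ lam)
    (β : List (Set Ω)) : BddAbove (Set.range fun ω => f ω + lam * sFun β ω) := by
  refine ⟨M + lam, ?_⟩
  rintro r ⟨ω, rfl⟩
  have h1 := (abs_le.1 (hfM ω)).2
  have h2 := sFun_le_one β ω
  have h3 := sFun_nonneg β ω
  show f ω + lam * sFun β ω ≤ M + lam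
  nlinarith

lemma QS_lb {f : Ω → ℝ} {M : ℝ} (hfM : ∀ ω, |f ω| ≤ M) : ∀ r ∈ QS 𝓑 f, -M ≤ r := by
  rintro r ⟨lam, hlam, β, hne, hβ, rfl⟩
  have hsup : interNum 𝓑 ≤ ⨆ ω, sFun β ω := interNum_le hne hβ
  have key : lam * interNum 𝓑 - M ≤ ⨆ ω, (f ω + lam * sFun β ω) := by
    rcases eq_or_lt_of_le hlam with heq | hlam'
    · obtain ω := Classical.arbitrary Ω
      refine le_trans ?_ (le_ciSup (bdd_fs hfM hlam β) ω)
      have h1 := (abs_le.1 (hfM ω)).1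
      have h3 := sFun_nonneg β ω
      rw [← heq]
      have h3 := sFun_nonneg β ω
      show 0 * interNum 𝓑 - M ≤ f ω + 0 * sFun β ω
      nlinarith
    · apply le_add_eps
      intro ε hε
      have h1 : (⨆ ω, sFun β ω) - ε / lam < ⨆ ω, sFun β ω := by
        have : 0 < ε / lam := div_pos hε hlam'
        linarith
      obtain ⟨ω, hω⟩ := exists_lt_of_lt_ciSup h1
      refine le_trans ?_ (add_le_add (le_ciSup (bdd_fs hfM hlam β) ω) le_rfl)
      have hf1 := (abs_le.1 (hfM ω)).1
      have h2 : interNum 𝓑 - ε / lam ≤ sFun β ω := by linarith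
      have hmul := mul_le_mul_of_nonneg_left h2 hlam
      rw [mul_sub, mul_div_cancel₀ _ (ne_of_gt hlam')] at hmul
      linarith
  linarith

lemma QS_nonempty (hB : ∃ B, B ∈ 𝓑) (f : Ω → ℝ) : (QS 𝓑 f).Nonempty := by
  obtain ⟨B, hB⟩ := hB
  exact ⟨_, 0, le_refl _, [B], by simp, by simpa using hB, rfl⟩

lemma qf_le {f : Ω → ℝ} {M : ℝ} (hfM : ∀ ω, |f ω| ≤ M) {r : ℝ} (hr : r ∈ QS 𝓑 f) :
    qf 𝓑 f ≤ r := csInf_le ⟨-M, QS_lb hfM⟩ hr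

lemma qf_lb {f : Ω → ℝ} {M : ℝ} (hfM : ∀ ω, |f ω| ≤ M) (hB : ∃ B, B ∈ 𝓑) :
    -M ≤ qf 𝓑 f := le_csInf (QS_nonempty hB f) (QS_lb hfM)

end Reverse

section Reverse2
set_option linter.unusedSectionVars false
variable [Nonempty Ω] {𝒜 𝓑 : Set (Set Ω)}

lemma qf_smul_le {f : Ω → ℝ} {M : ℝ} (hfM : ∀ ω, |f ω| ≤ M) (hB : ∃ B, B ∈ 𝓑)
    {t : ℝ} (ht : 0 < t) : qf 𝓑 (t • f) ≤ t * qf 𝓑 f := by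
  have htfM : ∀ ω, |(t • f) ω| ≤ t * M := fun ω => by
    simp only [Pi.smul_apply, smul_eq_mul, abs_mul, abs_of_pos ht]
    exact mul_le_mul_of_nonneg_left (hfM ω) ht.le
  have step : ∀ r ∈ QS 𝓑 f, qf 𝓑 (t • f) ≤ t * r := by
    rintro r ⟨lam, hlam, β, hne, hβ, rfl⟩
    have hmem : t * ((⨆ ω, (f ω + lam * sFun β ω)) - lam * interNum 𝓑) ∈ QS 𝓑 (t • f) := by
      refine ⟨t * lam, by positivity, β, hne, hβ, ?_⟩
      have hsup : (⨆ ω, ((t • f) ω + t * lam * sFun β ω)) = t * ⨆ ω, (f ω + lam * sFun β ω) := by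
        rw [Real.mul_iSup_of_nonneg ht.le]
        congr 1
        funext ω
        simp only [Pi.smul_apply, smul_eq_mul]
        ring
      rw [hsup]
      ring
    exact qf_le htfM hmem
  have h2 : ∀ r ∈ QS 𝓑 f, qf 𝓑 (t • f) / t ≤ r := fun r hr => by
    rw [div_le_iff₀ ht, mul_comm]
    exact step r hr
  have h3 : qf 𝓑 (t • f) / t ≤ qf 𝓑 f := le_csInf (QS_nonempty hB f) h2
  calc qf 𝓑 (t • f) = t * (qf 𝓑 (t • f) / t) := by field_simp
    _ ≤ t * qf 𝓑 f := mul_le_mul_of_nonneg_left h3 ht.le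

lemma qf_smul {f : Ω → ℝ} {M : ℝ} (hfM : ∀ ω, |f ω| ≤ M) (hB : ∃ B, B ∈ 𝓑)
    {t : ℝ} (ht : 0 < t) : qf 𝓑 (t • f) = t * qf 𝓑 f := by
  have h1 := qf_smul_le hfM hB ht
  have htfM : ∀ ω, |(t • f) ω| ≤ t * M := fun ω => by
    simp only [Pi.smul_apply, smul_eq_mul, abs_mul, abs_of_pos ht]
    exact mul_le_mul_of_nonneg_left (hfM ω) ht.le
  have h2 := qf_smul_le htfM hB (t := 1 / t) (by positivity)
  rw [smul_smul, one_div_mul_cancel (ne_of_gt ht), one_smul] at h2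
  have h3 : t * qf 𝓑 f ≤ qf 𝓑 (t • f) :=
    calc t * qf 𝓑 f ≤ t * (1 / t * qf 𝓑 (t • f)) := mul_le_mul_of_nonneg_left h2 ht.le
      _ = qf 𝓑 (t • f) := by field_simp
  linarith

lemma ciSup_add_le {u v : Ω → ℝ} (hu : BddAbove (Set.range u)) (hv : BddAbove (Set.range v)) :
    (⨆ ω, (u ω + v ω)) ≤ (⨆ ω, u ω) + ⨆ ω, v ω :=
  ciSup_le fun ω => add_le_add (le_ciSup hu ω) (le_ciSup hv ω)

lemma mem_flatten_replicate {k : ℕ} {l : List (Set Ω)} {B : Set Ω}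
    (h : B ∈ (List.replicate k l).flatten) : B ∈ l := by
  obtain ⟨l', hl', hB⟩ := List.mem_flatten.1 h
  rw [List.eq_of_mem_replicate hl'] at hB
  exact hB

lemma exists_nat_div {lam ε : ℝ} (hlam : 0 ≤ lam) (hε : 0 < ε) :
    ∃ p d : ℕ, 0 < p ∧ 0 < d ∧ lam ≤ (p : ℝ) / d ∧ (p : ℝ) / d ≤ lam + ε := by
  obtain ⟨qr, h1, h2⟩ := exists_rat_btwn (show lam < lam + ε by linarith)
  have hqpos : (0:ℝ) < (qr:ℝ) := lt_of_le_of_lt hlam h1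
  have hq : 0 < qr := by exact_mod_cast hqpos
  have hnum : (0:ℤ) < qr.num := Rat.num_pos.2 hq
  have hcast : ((qr.num.toNat : ℕ) : ℝ) / (qr.den : ℝ) = (qr : ℝ) := by
    rw [Rat.cast_def]
    congr 1
    exact_mod_cast Int.toNat_of_nonneg hnum.le
  refine ⟨qr.num.toNat, qr.den, by omega, qr.den_pos, ?_, ?_⟩
  · rw [hcast]; exact h1.le
  · rw [hcast]; exact h2.le

lemma QS_mono_lam {f : Ω → ℝ} {M : ℝ} (hfM : ∀ ω, |f ω| ≤ M) {lam mu : ℝ}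
    (h0 : 0 ≤ lam) (hlm : lam ≤ mu) (β : List (Set Ω)) :
    (⨆ ω, (f ω + mu * sFun β ω)) - mu * interNum 𝓑
      ≤ ((⨆ ω, (f ω + lam * sFun β ω)) - lam * interNum 𝓑) + (mu - lam) := by
  have h1 : (⨆ ω, (f ω + mu * sFun β ω)) ≤ (⨆ ω, (f ω + lam * sFun β ω)) + (mu - lam) := by
    apply ciSup_le
    intro ω
    have hle := le_ciSup (bdd_fs hfM h0 β) ω
    have h2 := sFun_le_one β ω
    have h3 := sFun_nonneg β ω
    nlinarith
  have hc := interNum_nonneg 𝓑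
  nlinarith [mul_le_mul_of_nonneg_right hlm hc]

lemma qf_add {f g : Ω → ℝ} {Mf Mg : ℝ} (hf : ∀ ω, |f ω| ≤ Mf) (hg : ∀ ω, |g ω| ≤ Mg)
    (hB : ∃ B, B ∈ 𝓑) : qf 𝓑 (f + g) ≤ qf 𝓑 f + qf 𝓑 g := by
  have hfg : ∀ ω, |(f + g) ω| ≤ Mf + Mg := fun ω => by
    simp only [Pi.add_apply]
    exact (abs_add_le _ _).trans (add_le_add (hf ω) (hg ω))
  apply le_add_eps
  intro ε hε
  have hε'pos : 0 < ε / 4 := by positivity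
  obtain ⟨r₁, hr₁S, hr₁⟩ := Real.lt_sInf_add_pos (QS_nonempty hB f) hε'pos
  obtain ⟨r₂, hr₂S, hr₂⟩ := Real.lt_sInf_add_pos (QS_nonempty hB g) hε'pos
  obtain ⟨lam₁, hlam₁, β₁, hne₁, hβ₁, rfl⟩ := hr₁S
  obtain ⟨lam₂, hlam₂, β₂, hne₂, hβ₂, rfl⟩ := hr₂S
  obtain ⟨p₁, d₁, hp₁, hd₁, hl₁, hu₁⟩ := exists_nat_div hlam₁ hε'pos
  obtain ⟨p₂, d₂, hp₂, hd₂, hl₂, hu₂⟩ := exists_nat_div hlam₂ hε'pos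
  set μ₁ : ℝ := (p₁ : ℝ) / d₁ with hμ₁def
  set μ₂ : ℝ := (p₂ : ℝ) / d₂ with hμ₂def
  have hμ₁ : 0 ≤ μ₁ := le_trans hlam₁ hl₁
  have hμ₂ : 0 ≤ μ₂ := le_trans hlam₂ hl₂
  have V1 : (⨆ ω, (f ω + μ₁ * sFun β₁ ω)) - μ₁ * interNum 𝓑
      ≤ qf 𝓑 f + 2 * (ε / 4) := by
    have hmono := QS_mono_lam (𝓑 := 𝓑) hf hlam₁ hl₁ β₁
    have : μ₁ - lam₁ ≤ ε / 4 := by linarith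
    have hqfe : qf 𝓑 f = sInf (QS 𝓑 f) := rfl
    rw [hqfe]
    linarith
  have V2 : (⨆ ω, (g ω + μ₂ * sFun β₂ ω)) - μ₂ * interNum 𝓑
      ≤ qf 𝓑 g + 2 * (ε / 4) := by
    have hmono := QS_mono_lam (𝓑 := 𝓑) hg hlam₂ hl₂ β₂
    have : μ₂ - lam₂ ≤ ε / 4 := by linarith
    have hqfe : qf 𝓑 g = sInf (QS 𝓑 g) := rfl
    rw [hqfe]
    linarith
  have hn₁ : 0 < β₁.length := List.length_pos_iff.2 hne₁
  have hn₂ : 0 < β₂.length := List.length_pos_iff.2 hne₂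
  set β := (List.replicate (p₁ * (d₂ * β₂.length)) β₁).flatten
      ++ (List.replicate (p₂ * (d₁ * β₁.length)) β₂).flatten with hβdef
  have hlen : β.length = p₁ * (d₂ * β₂.length) * β₁.length
      + p₂ * (d₁ * β₁.length) * β₂.length := by
    rw [hβdef, List.length_append, length_join_replicate, length_join_replicate]
  have hlenpos : 0 < β.length := by
    rw [hlen]
    positivity
  have hβne : β ≠ [] := List.length_pos_iff.1 hlenpos
  have hβmem : ∀ B ∈ β, B ∈ 𝓑 := by
    intro B hBm
    rw [hβdef, List.mem_append] at hBm
    rcases hBm with hBm | hBm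
    · exact hβ₁ B (mem_flatten_replicate hBm)
    · exact hβ₂ B (mem_flatten_replicate hBm)
  have hptwise : ∀ ω, (μ₁ + μ₂) * sFun β ω = μ₁ * sFun β₁ ω + μ₂ * sFun β₂ ω := by
    intro ω
    have hcnt : cnt β ω = (p₁ * (d₂ * β₂.length) : ℕ) * cnt β₁ ω
        + (p₂ * (d₁ * β₁.length) : ℕ) * cnt β₂ ω := by
      rw [hβdef, cnt_append, cnt_join_replicate, cnt_join_replicate]
    rw [sFun_eq, sFun_eq, sFun_eq, hcnt, hlen, hμ₁def, hμ₂def]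
    have e₁ : ((β₁.length : ℝ)) ≠ 0 := by exact_mod_cast hn₁.ne'
    have e₂ : ((β₂.length : ℝ)) ≠ 0 := by exact_mod_cast hn₂.ne'
    have e₃ : ((d₁ : ℝ)) ≠ 0 := by exact_mod_cast hd₁.ne'
    have e₄ : ((d₂ : ℝ)) ≠ 0 := by exact_mod_cast hd₂.ne'
    have e₅ : ((p₁ : ℝ)) ≠ 0 := by exact_mod_cast hp₁.ne'
    push_cast
    rw [div_add_div _ _ e₃ e₄]
    have e₆ : ((p₁ : ℝ) * (d₂ * β₂.length) * β₁.length
        + p₂ * (d₁ * β₁.length) * β₂.length) ≠ 0 := by positivity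
    field_simp
  have hsupeq : (⨆ ω, ((f + g) ω + (μ₁ + μ₂) * sFun β ω))
      = ⨆ ω, ((f ω + μ₁ * sFun β₁ ω) + (g ω + μ₂ * sFun β₂ ω)) := by
    congr 1
    funext ω
    rw [hptwise ω]
    simp only [Pi.add_apply]
    ring
  have hval : (⨆ ω, ((f + g) ω + (μ₁ + μ₂) * sFun β ω)) - (μ₁ + μ₂) * interNum 𝓑
      ≤ ((⨆ ω, (f ω + μ₁ * sFun β₁ ω)) - μ₁ * interNum 𝓑)
        + ((⨆ ω, (g ω + μ₂ * sFun β₂ ω)) - μ₂ * interNum 𝓑) := by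
    rw [hsupeq]
    have h1 := ciSup_add_le (bdd_fs hf hμ₁ β₁) (bdd_fs hg hμ₂ β₂)
    nlinarith [h1]
  have hmem : (⨆ ω, ((f + g) ω + (μ₁ + μ₂) * sFun β ω)) - (μ₁ + μ₂) * interNum 𝓑
      ∈ QS 𝓑 (f + g) := ⟨μ₁ + μ₂, by positivity, β, hβne, hβmem, rfl⟩
  have hq := qf_le hfg hmem
  linarith

end Reverse2

section Reverse3
set_option linter.unusedSectionVars false
variable [Nonempty Ω] {𝒜 𝓑 : Set (Set Ω)}

lemma sFun_singleton (B : Set Ω) (ω : Ω) : sFun [B] ω = ind B ω := by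
  simp [sFun, ind]

lemma exists_prob (h𝒜 : IsSetAlgebra 𝒜) (h𝓑 : 𝓑 ⊆ 𝒜) (hI : 0 < interNum 𝓑) :
    ∃ m : Set Ω → ℝ, IsFAProb 𝒜 m ∧ (∀ A ∈ 𝒜, m A ≤ 1) ∧ ∀ B ∈ 𝓑, interNum 𝓑 ≤ m B := by
  classical
  have hB : ∃ B, B ∈ 𝓑 := exists_mem_of_interNum_pos hI
  obtain ⟨B₀, hB₀⟩ := hB
  set V := Submodule.span ℝ (indSet 𝒜) with hV
  set N : V → ℝ := fun x => qf 𝓑 x.val with hNdef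
  have N_hom : ∀ c : ℝ, 0 < c → ∀ x : V, N (c • x) = c * N x := by
    intro c hc x
    obtain ⟨M, hM0, hM⟩ := span_bounded x.2
    exact qf_smul hM ⟨B₀, hB₀⟩ hc
  have N_add : ∀ x y : V, N (x + y) ≤ N x + N y := by
    intro x y
    obtain ⟨M1, _, h1⟩ := span_bounded x.2
    obtain ⟨M2, _, h2⟩ := span_bounded y.2
    exact qf_add h1 h2 ⟨B₀, hB₀⟩
  have hzero : ∀ ω, |(0 : V).val ω| ≤ (0:ℝ) := fun ω => by simp
  obtain ⟨g, -, hg⟩ := exists_extension_of_le_sublinear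
      (⟨⊥, 0⟩ : V →ₗ.[ℝ] ℝ) N N_hom N_add (by
    rintro ⟨x, hx⟩
    have hx0 : x = 0 := by simpa using hx
    subst hx0
    show (0:ℝ) ≤ N 0
    have h0 : -(0:ℝ) ≤ qf 𝓑 (0 : V).val := qf_lb hzero ⟨B₀, hB₀⟩
    simpa [hNdef] using h0)
  have hmemA : ∀ A ∈ 𝒜, ind A ∈ V := fun A hA => Submodule.subset_span ⟨A, hA, rfl⟩
  set m : Set Ω → ℝ := fun A => if h : ind A ∈ V then g ⟨ind A, h⟩ else 0 with hmdef
  have mval : ∀ (A : Set Ω) (h : ind A ∈ V), m A = g ⟨ind A, h⟩ := fun A h => dif_pos h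
  -- generic sup bound
  have g_le_sup : ∀ (x : V) (M : ℝ), (∀ ω, |x.val ω| ≤ M) → ∀ (b : ℝ),
      (∀ ω, x.val ω ≤ b) → g x ≤ b := by
    intro x M hxM b hb
    have hr : ((⨆ ω, (x.val ω + 0 * sFun [B₀] ω)) - 0 * interNum 𝓑) ∈ QS 𝓑 x.val :=
      ⟨0, le_rfl, [B₀], by simp, by simpa using hB₀, rfl⟩
    have h1 : g x ≤ (⨆ ω, (x.val ω + 0 * sFun [B₀] ω)) - 0 * interNum 𝓑 :=
      le_trans (hg x) (qf_le hxM hr)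
    have h2 : (⨆ ω, (x.val ω + 0 * sFun [B₀] ω)) ≤ b :=
      ciSup_le fun ω => by simpa using hb ω
    linarith
  -- nonnegativity
  have hnonneg : ∀ A ∈ 𝒜, 0 ≤ m A := by
    intro A hA
    have hAV := hmemA A hA
    have hneg : g (-⟨ind A, hAV⟩) ≤ 0 := by
      apply g_le_sup _ 1 (fun ω => by simpa using abs_ind_le A ω) 0
      intro ω
      have := ind_nonneg A ω
      show -(ind A ω) ≤ 0
      linarith
    rw [map_neg] at hneg
    rw [mval A hAV]
    linarith
  -- bounded by 1
  have hle1 : ∀ A ∈ 𝒜, m A ≤ 1 := by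
    intro A hA
    have hAV := hmemA A hA
    rw [mval A hAV]
    exact g_le_sup _ 1 (abs_ind_le A) 1 (ind_le_one A)
  -- univ
  have hunivV := hmemA Set.univ h𝒜.2.1
  have hind_univ : ind (Set.univ : Set Ω) = fun _ => (1:ℝ) := by
    funext ω; simp [ind]
  have huniv : m Set.univ = 1 := by
    have hub : m Set.univ ≤ 1 := hle1 _ h𝒜.2.1
    have hlb' : g (-⟨ind Set.univ, hunivV⟩) ≤ -1 := by
      apply g_le_sup _ 1 (fun ω => by simpa using abs_ind_le Set.univ ω) (-1)
      intro ω
      show -(ind Set.univ ω) ≤ -1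
      rw [hind_univ]
    rw [map_neg] at hlb'
    rw [mval _ hunivV]
    rw [mval _ hunivV] at hub
    linarith
  -- additivity
  have hadd : ∀ A ∈ 𝒜, ∀ B ∈ 𝒜, Disjoint A B → m (A ∪ B) = m A + m B := by
    intro A hA B hB' hd
    have hAV := hmemA A hA
    have hBV := hmemA B hB'
    have hUV := hmemA _ (h𝒜.2.2.2 A hA B hB')
    have hiu : ind (A ∪ B) = ind A + ind B := by
      funext ω
      simp [ind, Set.indicator_union_of_disjoint hd]
    have hsub : (⟨ind (A ∪ B), hUV⟩ : V) = ⟨ind A, hAV⟩ + ⟨ind B, hBV⟩ :=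
      Subtype.ext (by simp [hiu])
    rw [mval _ hUV, mval _ hAV, mval _ hBV, hsub, map_add]
  -- lower bound on 𝓑
  have hlower : ∀ B ∈ 𝓑, interNum 𝓑 ≤ m B := by
    intro B hBm
    have hBV := hmemA B (h𝓑 hBm)
    have hr : ((⨆ ω, ((-⟨ind B, hBV⟩ : V).val ω + 1 * sFun [B] ω)) - 1 * interNum 𝓑)
        ∈ QS 𝓑 (-⟨ind B, hBV⟩ : V).val :=
      ⟨1, zero_le_one, [B], by simp, by simpa using hBm, rfl⟩
    have hxM : ∀ ω, |(-⟨ind B, hBV⟩ : V).val ω| ≤ (1:ℝ) := fun ω => by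
      simpa using abs_ind_le B ω
    have h1 : g (-⟨ind B, hBV⟩) ≤ (⨆ ω, ((-⟨ind B, hBV⟩ : V).val ω + 1 * sFun [B] ω))
        - 1 * interNum 𝓑 := le_trans (hg _) (qf_le hxM hr)
    have h2 : (⨆ ω, ((-⟨ind B, hBV⟩ : V).val ω + 1 * sFun [B] ω)) = 0 := by
      have : (fun ω => ((-⟨ind B, hBV⟩ : V).val ω + 1 * sFun [B] ω)) = fun _ => (0:ℝ) := by
        funext ω
        show -(ind B ω) + 1 * sFun [B] ω = 0
        rw [sFun_singleton]
        ring
      rw [this]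
      exact ciSup_const
    rw [map_neg] at h1
    rw [h2] at h1
    rw [mval _ hBV]
    linarith
  exact ⟨m, ⟨hnonneg, huniv, hadd⟩, hle1, hlower⟩

end Reverse3

section Final
set_option linter.unusedSectionVars false
variable [Nonempty Ω] {𝒜 : Set (Set Ω)}

lemma half_summable : Summable (fun n : ℕ => (1/2:ℝ)^(n+1)) := by
  have h : Summable (fun n : ℕ => (1/2:ℝ)^n) :=
    summable_geometric_of_lt_one (by norm_num) (by norm_num)
  have := h.mul_right (1/2:ℝ)
  refine this.congr fun n => ?_
  rw [pow_succ]

lemma half_tsum : ∑' n : ℕ, (1/2:ℝ)^(n+1) = 1 := by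
  have h1 : ∑' n : ℕ, (1/2:ℝ)^n = 2 := by
    rw [tsum_geometric_of_lt_one (by norm_num) (by norm_num)]
    norm_num
  calc ∑' n : ℕ, (1/2:ℝ)^(n+1) = ∑' n : ℕ, (1/2:ℝ)^n * (1/2) := by
        apply tsum_congr; intro n; rw [pow_succ]
    _ = (∑' n : ℕ, (1/2:ℝ)^n) * (1/2) := tsum_mul_right
    _ = 1 := by rw [h1]; norm_num

lemma kelley_reverse (h𝒜 : IsSetAlgebra 𝒜) (𝓑 : ℕ → Set (Set Ω))
    (hsub : ∀ n, 𝓑 n ⊆ 𝒜 \ {∅}) (hpos : ∀ n, 0 < interNum (𝓑 n))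
    (hcov : 𝒜 = {(∅ : Set Ω)} ∪ ⋃ n, 𝓑 n) :
    ∃ m : Set Ω → ℝ, IsFAProb 𝒜 m ∧ ∀ A ∈ 𝒜, A ≠ ∅ → 0 < m A := by
  classical
  have hex : ∀ n, ∃ mn : Set Ω → ℝ, IsFAProb 𝒜 mn ∧ (∀ A ∈ 𝒜, mn A ≤ 1) ∧
      ∀ B ∈ 𝓑 n, interNum (𝓑 n) ≤ mn B :=
    fun n => exists_prob h𝒜 (fun B hB => (hsub n hB).1) (hpos n)
  choose ms hms using hex
  refine ⟨fun A => ∑' n, (1/2:ℝ)^(n+1) * ms n A, ⟨?_, ?_, ?_⟩, ?_⟩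
  case _ =>
    intro A hA
    exact tsum_nonneg fun n => mul_nonneg (by positivity) ((hms n).1.1 A hA)
  case _ =>
    have : ∀ n, (1/2:ℝ)^(n+1) * ms n Set.univ = (1/2:ℝ)^(n+1) := by
      intro n; rw [(hms n).1.2.1, mul_one]
    calc ∑' n, (1/2:ℝ)^(n+1) * ms n Set.univ = ∑' n : ℕ, (1/2:ℝ)^(n+1) :=
          tsum_congr this
      _ = 1 := half_tsum
  case _ =>
    intro A hA B hB hd
    have hsumA : Summable (fun n => (1/2:ℝ)^(n+1) * ms n A) := by
      apply Summable.of_nonneg_of_le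
        (fun n => mul_nonneg (by positivity) ((hms n).1.1 A hA))
        (fun n => ?_) half_summable
      calc (1/2:ℝ)^(n+1) * ms n A ≤ (1/2:ℝ)^(n+1) * 1 :=
            mul_le_mul_of_nonneg_left ((hms n).2.1 A hA) (by positivity)
        _ = (1/2:ℝ)^(n+1) := mul_one _
    have hsumB : Summable (fun n => (1/2:ℝ)^(n+1) * ms n B) := by
      apply Summable.of_nonneg_of_le
        (fun n => mul_nonneg (by positivity) ((hms n).1.1 B hB))
        (fun n => ?_) half_summable
      calc (1/2:ℝ)^(n+1) * ms n B ≤ (1/2:ℝ)^(n+1) * 1 :=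
            mul_le_mul_of_nonneg_left ((hms n).2.1 B hB) (by positivity)
        _ = (1/2:ℝ)^(n+1) := mul_one _
    calc ∑' n, (1/2:ℝ)^(n+1) * ms n (A ∪ B)
        = ∑' n, ((1/2:ℝ)^(n+1) * ms n A + (1/2:ℝ)^(n+1) * ms n B) := by
          apply tsum_congr; intro n
          rw [(hms n).1.2.2 A hA B hB hd]; ring
      _ = _ := Summable.tsum_add hsumA hsumB
  case _ =>
    intro A hA hne
    have hAu : A ∈ {(∅ : Set Ω)} ∪ ⋃ n, 𝓑 n := by rw [← hcov]; exact hA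
    rcases hAu with h0 | hU
    · exact absurd h0 hne
    obtain ⟨N, hN⟩ := Set.mem_iUnion.1 hU
    have hsumA : Summable (fun n => (1/2:ℝ)^(n+1) * ms n A) := by
      apply Summable.of_nonneg_of_le
        (fun n => mul_nonneg (by positivity) ((hms n).1.1 A hA))
        (fun n => ?_) half_summable
      calc (1/2:ℝ)^(n+1) * ms n A ≤ (1/2:ℝ)^(n+1) * 1 :=
            mul_le_mul_of_nonneg_left ((hms n).2.1 A hA) (by positivity)
        _ = (1/2:ℝ)^(n+1) := mul_one _
    have hterm : (1/2:ℝ)^(N+1) * ms N A ≤ ∑' n, (1/2:ℝ)^(n+1) * ms n A :=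
      Summable.le_tsum hsumA N fun j _ => mul_nonneg (by positivity) ((hms j).1.1 A hA)
    have hmsN : interNum (𝓑 N) ≤ ms N A := (hms N).2.2 A hN
    have : (0:ℝ) < (1/2:ℝ)^(N+1) * ms N A :=
      mul_pos (by positivity) (lt_of_lt_of_le (hpos N) hmsN)
    linarith

end Final

end Kelley

/-- **Kelley's Theorem.** An algebra `𝒜` of subsets of a nonempty set `Ω` admits a
strictly positive finitely additive probability iff
`𝒜 = {∅} ∪ ⋃ₙ 𝓑ₙ` with each `𝓑ₙ ⊆ 𝒜₊` and `I(𝓑ₙ) > 0`. -/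
theorem kelley {Ω : Type*} [Nonempty Ω] (𝒜 : Set (Set Ω)) (h𝒜 : IsSetAlgebra 𝒜) :
    (∃ m : Set Ω → ℝ, IsFAProb 𝒜 m ∧ ∀ A ∈ 𝒜, A ≠ ∅ → 0 < m A) ↔
      ∃ 𝓑 : ℕ → Set (Set Ω), (∀ n, 𝓑 n ⊆ 𝒜 \ {∅}) ∧ (∀ n, 0 < interNum (𝓑 n)) ∧
        𝒜 = {(∅ : Set Ω)} ∪ ⋃ n, 𝓑 n := by
  constructor
  · rintro ⟨m, hm, hpos⟩
    exact Kelley.kelley_forward h𝒜 hm hpos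
  · rintro ⟨𝓑, hsub, hpos, hcov⟩
    exact Kelley.kelley_reverse h𝒜 𝓑 hsub hpos hcov
end

section
/- Minimax identity for intersection numbers: for every nonempty family 𝓑 ⊆ 𝒜₊, the intersection number satisfies I(𝓑) = sup over all finitely additive probabilities m on 𝒜 of inf_{B ∈ 𝓑} m(B). -/
namespace KelleyAux

noncomputable section
open Set

variable {Ω : Type*}

/-- real indicator -/
noncomputable def ind (B : Set Ω) : Ω → ℝ := B.indicator fun _ => (1:ℝ)

lemma ind_nonneg (B : Set Ω) (ω : Ω) : 0 ≤ ind B ω :=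
  Set.indicator_nonneg (fun _ _ => zero_le_one) _

lemma ind_le_one (B : Set Ω) (ω : Ω) : ind B ω ≤ 1 := by
  by_cases h : ω ∈ B <;> simp [ind, h]

lemma ind_of_mem {B : Set Ω} {ω : Ω} (h : ω ∈ B) : ind B ω = 1 := by simp [ind, h]
lemma ind_of_not_mem {B : Set Ω} {ω : Ω} (h : ω ∉ B) : ind B ω = 0 := by simp [ind, h]

/-- count function of a list of sets -/
noncomputable def cnt (β : List (Set Ω)) (ω : Ω) : ℝ := (β.map fun B => ind B ω).sum

lemma cnt_nonneg (β : List (Set Ω)) (ω : Ω) : 0 ≤ cnt β ω := by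
  apply List.sum_nonneg
  intro x hx
  obtain ⟨B, _, rfl⟩ := List.mem_map.1 hx
  exact ind_nonneg B ω

lemma cnt_le_length (β : List (Set Ω)) (ω : Ω) : cnt β ω ≤ β.length := by
  have : cnt β ω ≤ ((β.map fun _ => (1:ℝ)).sum) := by
    apply List.sum_le_sum ?_
    · intro b hb; exact ind_le_one b ω
  simpa using this

lemma cnt_nat (β : List (Set Ω)) (ω : Ω) : ∃ k : ℕ, cnt β ω = (k : ℝ) := by
  induction β with
  | nil => exact ⟨0, by simp [cnt]⟩
  | cons B l ih =>
    obtain ⟨k, hk⟩ := ih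
    by_cases h : ω ∈ B
    · exact ⟨k+1, by simp [cnt, ind_of_mem h, List.sum_cons] at hk ⊢; rw [hk]; push_cast; ring⟩
    · exact ⟨k, by simp [cnt, ind_of_not_mem h, List.sum_cons] at hk ⊢; rw [hk]⟩

lemma sFun_eq (β : List (Set Ω)) (ω : Ω) : sFun β ω = cnt β ω / β.length := rfl

end
end KelleyAux
section Chunk2
namespace KelleyAux
open Set
variable {Ω : Type*} [Nonempty Ω]

lemma bddAbove_of_le {g : Ω → ℝ} {C : ℝ} (h : ∀ ω, g ω ≤ C) : BddAbove (Set.range g) :=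
  ⟨C, by rintro _ ⟨ω, rfl⟩; exact h ω⟩

def SSet (𝓑 : Set (Set Ω)) : Set ℝ :=
  {r | ∃ β : List (Set Ω), β ≠ [] ∧ (∀ B ∈ β, B ∈ 𝓑) ∧ r = ⨆ ω, sFun β ω}

lemma interNum_eq (𝓑 : Set (Set Ω)) : interNum 𝓑 = sInf (SSet 𝓑) := rfl

lemma sFun_nonneg (β : List (Set Ω)) (ω : Ω) : 0 ≤ sFun β ω :=
  div_nonneg (cnt_nonneg β ω) (by positivity)

lemma sFun_le_one (β : List (Set Ω)) (ω : Ω) : sFun β ω ≤ 1 := by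
  rcases eq_or_ne β [] with rfl | h
  · simp [sFun]
  · have hn : (0:ℝ) < β.length := by
      have := List.length_pos_iff.2 h; exact_mod_cast this
    rw [sFun_eq, div_le_one hn]
    exact cnt_le_length β ω

lemma SSet_nonneg {𝓑 : Set (Set Ω)} {r : ℝ} (hr : r ∈ SSet 𝓑) : 0 ≤ r := by
  obtain ⟨β, hβ, _, rfl⟩ := hr
  obtain ⟨ω⟩ := ‹Nonempty Ω›
  exact le_trans (sFun_nonneg β ω) (le_ciSup (bddAbove_of_le (sFun_le_one β)) ω)

lemma SSet_nonempty {𝓑 : Set (Set Ω)} (hne : 𝓑.Nonempty) : (SSet 𝓑).Nonempty := by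
  obtain ⟨B, hB⟩ := hne
  exact ⟨_, [B], by simp, by simpa using hB, rfl⟩

lemma bddBelow_SSet (𝓑 : Set (Set Ω)) : BddBelow (SSet 𝓑) :=
  ⟨0, fun r hr => SSet_nonneg hr⟩

lemma interNum_nonneg (𝓑 : Set (Set Ω)) (hne : 𝓑.Nonempty) : 0 ≤ interNum 𝓑 :=
  le_csInf (SSet_nonempty hne) fun r hr => SSet_nonneg hr

lemma interNum_le {𝓑 : Set (Set Ω)} {r : ℝ} (hr : r ∈ SSet 𝓑) : interNum 𝓑 ≤ r :=
  csInf_le (bddBelow_SSet 𝓑) hr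

/-- representations of conical combinations -/
noncomputable def hRep (rep : List (ℝ × Set Ω)) : Ω → ℝ := fun ω =>
  (rep.map fun q => q.1 * ind q.2 ω).sum

noncomputable def massRep (rep : List (ℝ × Set Ω)) : ℝ := (rep.map Prod.fst).sum

def ValidRep (𝓑 : Set (Set Ω)) (rep : List (ℝ × Set Ω)) : Prop :=
  ∀ q ∈ rep, 0 ≤ q.1 ∧ q.2 ∈ 𝓑

lemma hRep_nonneg {rep : List (ℝ × Set Ω)} (h : ∀ q ∈ rep, 0 ≤ q.1) (ω : Ω) :
    0 ≤ hRep rep ω := by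
  apply List.sum_nonneg
  intro x hx
  obtain ⟨q, hq, rfl⟩ := List.mem_map.1 hx
  exact mul_nonneg (h q hq) (ind_nonneg _ _)

lemma hRep_le_mass {rep : List (ℝ × Set Ω)} (h : ∀ q ∈ rep, 0 ≤ q.1) (ω : Ω) :
    hRep rep ω ≤ massRep rep := by
  unfold hRep massRep
  apply List.sum_le_sum
  intro q hq
  calc q.1 * ind q.2 ω ≤ q.1 * 1 :=
        mul_le_mul_of_nonneg_left (ind_le_one _ _) (h q hq)
    _ = q.1 := mul_one _
end KelleyAux
end Chunk2
section Chunk3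
namespace KelleyAux
open Set
variable {Ω : Type*} [Nonempty Ω]

noncomputable def natβ (rep : List (ℕ × Set Ω)) : List (Set Ω) :=
  rep.flatMap fun q => List.replicate q.1 q.2

omit [Nonempty Ω] in
lemma natβ_length (rep : List (ℕ × Set Ω)) :
    (natβ rep).length = (rep.map Prod.fst).sum := by
  induction rep with
  | nil => simp [natβ]
  | cons q l ih => simp [natβ, List.flatMap] at ih ⊢; omega

omit [Nonempty Ω] in
lemma natβ_mem {rep : List (ℕ × Set Ω)} {B : Set Ω} (h : B ∈ natβ rep) :
    ∃ q ∈ rep, B = q.2 := by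
  induction rep with
  | nil => simp [natβ] at h
  | cons q l ih =>
    simp only [natβ, List.flatMap_cons, List.mem_append] at h
    rcases h with h | h
    · exact ⟨q, by simp, (List.eq_of_mem_replicate h)⟩
    · obtain ⟨q', hq', rfl⟩ := ih h
      exact ⟨q', by simp [hq'], rfl⟩

omit [Nonempty Ω] in
lemma cnt_append (l₁ l₂ : List (Set Ω)) (ω : Ω) :
    cnt (l₁ ++ l₂) ω = cnt l₁ ω + cnt l₂ ω := by
  simp [cnt]

omit [Nonempty Ω] in
lemma cnt_replicate (a : ℕ) (B : Set Ω) (ω : Ω) :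
    cnt (List.replicate a B) ω = (a : ℝ) * ind B ω := by
  simp [cnt, List.map_replicate, List.sum_replicate, nsmul_eq_mul]

omit [Nonempty Ω] in
lemma cnt_natβ (rep : List (ℕ × Set Ω)) (ω : Ω) :
    cnt (natβ rep) ω = (rep.map fun q => (q.1 : ℝ) * ind q.2 ω).sum := by
  induction rep with
  | nil => simp [natβ, cnt]
  | cons q l ih =>
    simp only [natβ, List.flatMap_cons] at ih ⊢
    rw [cnt_append, cnt_replicate, ih, List.map_cons, List.sum_cons]

omit [Nonempty Ω] in
lemma sum_map_sub_one {α : Type*} (l : List α) (f : α → ℝ) :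
    (l.map fun a => f a - 1).sum = (l.map f).sum - l.length := by
  induction l with
  | nil => simp
  | cons a l ih => simp [List.sum_cons, ih]; push_cast; ring

lemma L1nat {𝓑 : Set (Set Ω)} (rep : List (ℕ × Set Ω))
    (hv : ∀ q ∈ rep, q.2 ∈ 𝓑) :
    ((rep.map Prod.fst).sum : ℝ) * interNum 𝓑 ≤
      ⨆ ω, (rep.map fun q => (q.1 : ℝ) * ind q.2 ω).sum := by
  have hfun : ∀ ω, (rep.map fun q => (q.1 : ℝ) * ind q.2 ω).sum = cnt (natβ rep) ω :=
    fun ω => (cnt_natβ rep ω).symm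
  simp only [hfun]
  set n := (rep.map Prod.fst).sum with hn
  rcases Nat.eq_zero_or_pos n with h0 | hpos
  · rw [h0]
    simp only [Nat.cast_zero, zero_mul]
    exact Real.iSup_nonneg fun ω => cnt_nonneg _ _
  · have hlen : (natβ rep).length = n := natβ_length rep
    have hβne : natβ rep ≠ [] := by
      intro h; rw [h] at hlen; simp at hlen; omega
    have hnR : (0:ℝ) < (n:ℝ) := by exact_mod_cast hpos
    have hcnt : ∀ ω, cnt (natβ rep) ω = (n:ℝ) * sFun (natβ rep) ω := by
      intro ω
      rw [sFun_eq, hlen]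
      field_simp
    simp only [hcnt]
    rw [← Real.mul_iSup_of_nonneg hnR.le]
    apply mul_le_mul_of_nonneg_left _ hnR.le
    apply interNum_le
    exact ⟨natβ rep, hβne, fun B hB => by obtain ⟨q, hq, rfl⟩ := natβ_mem hB; exact hv q hq, rfl⟩

lemma L1 {𝓑 : Set (Set Ω)} (hne : 𝓑.Nonempty) (rep : List (ℝ × Set Ω))
    (hv : ValidRep 𝓑 rep) :
    massRep rep * interNum 𝓑 ≤ ⨆ ω, hRep rep ω := by
  classical
  set I := interNum 𝓑 with hIdef
  have h1 : ∀ q ∈ rep, 0 ≤ q.1 := fun q hq => (hv q hq).1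
  have hI0 : 0 ≤ I := interNum_nonneg 𝓑 hne
  set supH := ⨆ ω, hRep rep ω with hsupHdef
  have hsupH0 : 0 ≤ supH := Real.iSup_nonneg fun ω => hRep_nonneg h1 ω
  apply le_of_forall_pos_le_add
  intro ε hε
  obtain ⟨N, hN⟩ := exists_nat_gt ((rep.length : ℝ) * I / ε)
  have hNpos : (0:ℝ) < N := lt_of_le_of_lt (div_nonneg (by positivity) hε.le) hN
  set natrep : List (ℕ × Set Ω) := rep.map fun q => (⌊q.1 * (N:ℝ)⌋₊, q.2) with hnatrep
  have hvnat : ∀ q ∈ natrep, q.2 ∈ 𝓑 := by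
    intro q hq
    obtain ⟨p, hp, rfl⟩ := List.mem_map.1 hq
    exact (hv p hp).2
  -- pointwise bound
  have hpt : ∀ ω, (natrep.map fun q => (q.1:ℝ) * ind q.2 ω).sum ≤ N * hRep rep ω := by
    intro ω
    rw [hnatrep, List.map_map]
    unfold hRep
    rw [← List.sum_map_mul_left]
    apply List.sum_le_sum
    intro q hq
    simp only [Function.comp_apply]
    have h2 : (⌊q.1 * (N:ℝ)⌋₊:ℝ) ≤ q.1 * N := Nat.floor_le (mul_nonneg (h1 q hq) hNpos.le)
    calc (⌊q.1 * (N:ℝ)⌋₊:ℝ) * ind q.2 ω ≤ (q.1 * N) * ind q.2 ω :=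
          mul_le_mul_of_nonneg_right h2 (ind_nonneg _ _)
      _ = N * (q.1 * ind q.2 ω) := by ring
  -- mass bound
  have hcast : ((natrep.map Prod.fst).sum : ℝ) = (rep.map fun q => ((⌊q.1 * (N:ℝ)⌋₊ : ℕ) : ℝ)).sum := by
    rw [hnatrep, List.map_map, Nat.cast_list_sum, List.map_map]
    simp [Function.comp_def]
  have hmass : (N:ℝ) * massRep rep - rep.length ≤ ((natrep.map Prod.fst).sum : ℝ) := by
    rw [hcast]
    have hNm : (N:ℝ) * massRep rep = (rep.map fun q => (N:ℝ) * q.1).sum := by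
      unfold massRep
      rw [List.sum_map_mul_left]
    have := sum_map_sub_one rep (fun q => (N:ℝ) * q.1)
    rw [hNm, ← this]
    apply List.sum_le_sum
    intro q hq
    have := Nat.lt_floor_add_one (q.1 * (N:ℝ))
    have hc : q.1 * (N:ℝ) = (N:ℝ) * q.1 := mul_comm _ _
    linarith
  -- sup bound
  have hsup1 : (⨆ ω, (natrep.map fun q => (q.1:ℝ) * ind q.2 ω).sum) ≤ N * supH := by
    rw [hsupHdef, Real.mul_iSup_of_nonneg hNpos.le]
    apply ciSup_le
    intro ω
    have hbdd : BddAbove (Set.range fun ω' => (N:ℝ) * hRep rep ω') :=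
      bddAbove_of_le fun ω' => mul_le_mul_of_nonneg_left (hRep_le_mass h1 ω') hNpos.le
    exact le_trans (hpt ω) (le_ciSup hbdd ω)
  have key : ((N:ℝ) * massRep rep - rep.length) * I ≤ N * supH := by
    calc ((N:ℝ) * massRep rep - rep.length) * I
        ≤ ((natrep.map Prod.fst).sum : ℝ) * I := mul_le_mul_of_nonneg_right hmass hI0
      _ ≤ ⨆ ω, (natrep.map fun q => (q.1:ℝ) * ind q.2 ω).sum := L1nat natrep hvnat
      _ ≤ N * supH := hsup1
  have hlenI : (rep.length:ℝ) * I ≤ (N:ℝ) * ε := by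
    have : (rep.length:ℝ) * I < (N:ℝ) * ε := (div_lt_iff₀ hε).1 hN
    linarith
  have hfin : (N:ℝ) * (massRep rep * I) ≤ (N:ℝ) * (supH + ε) := by nlinarith [key, hlenI]
  exact (mul_le_mul_iff_right₀ hNpos).1 hfin

end KelleyAux
end Chunk3
section Chunk4
namespace KelleyAux
open Set
variable {Ω : Type*} [Nonempty Ω]

def Bdd (Ω : Type*) : Submodule ℝ (Ω → ℝ) where
  carrier := {f | ∃ C, ∀ ω, |f ω| ≤ C}
  zero_mem' := ⟨0, fun ω => by simp⟩
  add_mem' := by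
    rintro f g ⟨C, hC⟩ ⟨D, hD⟩
    exact ⟨C + D, fun ω => (abs_add_le _ _).trans (add_le_add (hC ω) (hD ω))⟩
  smul_mem' := by
    rintro c f ⟨C, hC⟩
    refine ⟨|c| * C, fun ω => ?_⟩
    rw [Pi.smul_apply, smul_eq_mul, abs_mul]
    exact mul_le_mul_of_nonneg_left (hC ω) (abs_nonneg c)

def PSet (𝓑 : Set (Set Ω)) (f : Ω → ℝ) : Set ℝ :=
  {r | ∃ rep : List (ℝ × Set Ω), ValidRep 𝓑 rep ∧
        r = (⨆ ω, (f ω + hRep rep ω)) - massRep rep * interNum 𝓑}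

noncomputable def pFun (𝓑 : Set (Set Ω)) (f : Ω → ℝ) : ℝ := sInf (PSet 𝓑 f)

omit [Nonempty Ω] in
lemma hRep_nil (ω : Ω) : hRep ([] : List (ℝ × Set Ω)) ω = 0 := by simp [hRep]

omit [Nonempty Ω] in
lemma massRep_nil : massRep ([] : List (ℝ × Set Ω)) = 0 := by simp [massRep]

omit [Nonempty Ω] in
lemma PSet_nonempty (𝓑 : Set (Set Ω)) (f : Ω → ℝ) : (PSet 𝓑 f).Nonempty :=
  ⟨_, [], fun q hq => absurd hq List.not_mem_nil, rfl⟩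

/-- lower bound for elements of `PSet` -/
lemma PSet_lb {𝓑 : Set (Set Ω)} (hne : 𝓑.Nonempty) {f : Ω → ℝ} {C : ℝ}
    (hC : ∀ ω, |f ω| ≤ C) : ∀ r ∈ PSet 𝓑 f, -C ≤ r := by
  rintro r ⟨rep, hv, rfl⟩
  have h1 : ∀ q ∈ rep, 0 ≤ q.1 := fun q hq => (hv q hq).1
  have hbd : BddAbove (Set.range fun ω => f ω + hRep rep ω) :=
    bddAbove_of_le fun ω => add_le_add ((abs_le.1 (hC ω)).2) (hRep_le_mass h1 ω)
  have hsub : (⨆ ω, hRep rep ω) ≤ (⨆ ω, (f ω + hRep rep ω)) + C := by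
    apply ciSup_le
    intro ω
    have : hRep rep ω = (f ω + hRep rep ω) - f ω := by ring
    rw [this]
    have h2 : f ω + hRep rep ω ≤ ⨆ ω', (f ω' + hRep rep ω') := le_ciSup hbd ω
    have h3 : -C ≤ f ω := (abs_le.1 (hC ω)).1
    linarith
  have hL1 := L1 hne rep hv
  linarith

lemma pFun_bddBelow {𝓑 : Set (Set Ω)} (hne : 𝓑.Nonempty) {f : Ω → ℝ} {C : ℝ}
    (hC : ∀ ω, |f ω| ≤ C) : BddBelow (PSet 𝓑 f) :=
  ⟨-C, fun r hr => PSet_lb hne hC r hr⟩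

lemma pFun_lb {𝓑 : Set (Set Ω)} (hne : 𝓑.Nonempty) {f : Ω → ℝ} {C : ℝ}
    (hC : ∀ ω, |f ω| ≤ C) : -C ≤ pFun 𝓑 f :=
  le_csInf (PSet_nonempty 𝓑 f) (PSet_lb hne hC)

lemma pFun_le_sup {𝓑 : Set (Set Ω)} (hne : 𝓑.Nonempty) {f : Ω → ℝ} {C : ℝ}
    (hC : ∀ ω, |f ω| ≤ C) : pFun 𝓑 f ≤ ⨆ ω, f ω := by
  have hmem : (⨆ ω, f ω) ∈ PSet 𝓑 f := by
    refine ⟨[], fun q hq => absurd hq List.not_mem_nil, ?_⟩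
    simp [hRep_nil, massRep_nil]
  exact csInf_le (pFun_bddBelow hne hC) hmem

omit [Nonempty Ω] in
lemma hRep_append (r₁ r₂ : List (ℝ × Set Ω)) (ω : Ω) :
    hRep (r₁ ++ r₂) ω = hRep r₁ ω + hRep r₂ ω := by simp [hRep]

omit [Nonempty Ω] in
lemma massRep_append (r₁ r₂ : List (ℝ × Set Ω)) :
    massRep (r₁ ++ r₂) = massRep r₁ + massRep r₂ := by simp [massRep]

lemma pFun_add {𝓑 : Set (Set Ω)} (hne : 𝓑.Nonempty) {f g : Ω → ℝ} {C D : ℝ}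
    (hC : ∀ ω, |f ω| ≤ C) (hD : ∀ ω, |g ω| ≤ D) :
    pFun 𝓑 (f + g) ≤ pFun 𝓑 f + pFun 𝓑 g := by
  have key : ∀ a ∈ PSet 𝓑 f, ∀ b ∈ PSet 𝓑 g, pFun 𝓑 (f + g) ≤ a + b := by
    rintro a ⟨r₁, hv₁, rfl⟩ b ⟨r₂, hv₂, rfl⟩
    have hv : ValidRep 𝓑 (r₁ ++ r₂) := by
      intro q hq
      rcases List.mem_append.1 hq with h | h
      · exact hv₁ q h
      · exact hv₂ q h
    have hmem : ((⨆ ω, ((f + g) ω + hRep (r₁ ++ r₂) ω)) - massRep (r₁ ++ r₂) * interNum 𝓑)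
        ∈ PSet 𝓑 (f + g) := ⟨r₁ ++ r₂, hv, rfl⟩
    have hCD : ∀ ω, |(f + g) ω| ≤ C + D := fun ω =>
      (abs_add_le _ _).trans (add_le_add (hC ω) (hD ω))
    refine le_trans (csInf_le (pFun_bddBelow hne hCD) hmem) ?_
    have h11 : ∀ q ∈ r₁, 0 ≤ q.1 := fun q hq => (hv₁ q hq).1
    have h12 : ∀ q ∈ r₂, 0 ≤ q.1 := fun q hq => (hv₂ q hq).1
    have hb1 : BddAbove (Set.range fun ω => f ω + hRep r₁ ω) :=
      bddAbove_of_le fun ω => add_le_add ((abs_le.1 (hC ω)).2) (hRep_le_mass h11 ω)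
    have hb2 : BddAbove (Set.range fun ω => g ω + hRep r₂ ω) :=
      bddAbove_of_le fun ω => add_le_add ((abs_le.1 (hD ω)).2) (hRep_le_mass h12 ω)
    have hsup : (⨆ ω, ((f + g) ω + hRep (r₁ ++ r₂) ω)) ≤
        (⨆ ω, (f ω + hRep r₁ ω)) + ⨆ ω, (g ω + hRep r₂ ω) := by
      apply ciSup_le
      intro ω
      rw [hRep_append]
      have e1 : f ω + hRep r₁ ω ≤ ⨆ ω', (f ω' + hRep r₁ ω') := le_ciSup hb1 ω
      have e2 : g ω + hRep r₂ ω ≤ ⨆ ω', (g ω' + hRep r₂ ω') := le_ciSup hb2 ω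
      have : (f + g) ω = f ω + g ω := rfl
      rw [this]
      linarith
    rw [massRep_append]
    linarith
  have hg : pFun 𝓑 (f + g) - pFun 𝓑 f ≤ pFun 𝓑 g := by
    apply le_csInf (PSet_nonempty 𝓑 g)
    intro b hb
    rw [sub_le_iff_le_add]
    have : pFun 𝓑 (f + g) - b ≤ pFun 𝓑 f := by
      apply le_csInf (PSet_nonempty 𝓑 f)
      intro a ha
      rw [sub_le_iff_le_add]
      have := key a ha b hb
      linarith
    linarith
  linarith

lemma pFun_smul_le {𝓑 : Set (Set Ω)} (hne : 𝓑.Nonempty) (f : Ω → ℝ) {c : ℝ} (hc : 0 < c)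
    {C : ℝ} (hC : ∀ ω, |f ω| ≤ C) :
    pFun 𝓑 (fun ω => c * f ω) ≤ c * pFun 𝓑 f := by
  have hmap : ∀ r ∈ PSet 𝓑 f, c * r ∈ PSet 𝓑 (fun ω => c * f ω) := by
    rintro r ⟨rep, hv, rfl⟩
    refine ⟨rep.map fun q => (c * q.1, q.2), ?_, ?_⟩
    · intro q hq
      obtain ⟨p, hp, rfl⟩ := List.mem_map.1 hq
      exact ⟨mul_nonneg hc.le (hv p hp).1, (hv p hp).2⟩
    · have hh : ∀ ω, hRep (rep.map fun q => (c * q.1, q.2)) ω = c * hRep rep ω := by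
        intro ω
        unfold hRep
        rw [List.map_map, ← List.sum_map_mul_left]
        congr 1
        apply List.map_congr_left
        intro q hq
        simp [Function.comp]
        ring
      have hm : massRep (rep.map fun q => (c * q.1, q.2)) = c * massRep rep := by
        unfold massRep
        rw [List.map_map, ← List.sum_map_mul_left]
        rfl
      simp only [hh, hm]
      rw [mul_sub]
      congr 1
      · rw [Real.mul_iSup_of_nonneg hc.le]
        congr 1
        funext ω
        ring
      · ring
  have hCc : ∀ ω, |c * f ω| ≤ c * C := by
    intro ω
    rw [abs_mul, abs_of_pos hc]
    exact mul_le_mul_of_nonneg_left (hC ω) hc.le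
  rw [show c * pFun 𝓑 f = c * sInf (PSet 𝓑 f) from rfl]
  rw [← div_le_iff₀' hc]
  apply le_csInf (PSet_nonempty 𝓑 f)
  intro r hr
  rw [div_le_iff₀' hc]
  exact csInf_le (pFun_bddBelow hne hCc) (hmap r hr)

lemma pFun_smul {𝓑 : Set (Set Ω)} (hne : 𝓑.Nonempty) (f : Ω → ℝ) {c : ℝ} (hc : 0 < c)
    {C : ℝ} (hC : ∀ ω, |f ω| ≤ C) :
    pFun 𝓑 (fun ω => c * f ω) = c * pFun 𝓑 f := by
  refine le_antisymm (pFun_smul_le hne f hc hC) ?_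
  have hCc : ∀ ω, |c * f ω| ≤ c * C := by
    intro ω
    rw [abs_mul, abs_of_pos hc]
    exact mul_le_mul_of_nonneg_left (hC ω) hc.le
  have h2 := pFun_smul_le hne (fun ω => c * f ω) (inv_pos.2 hc) hCc
  have he : (fun ω => c⁻¹ * (c * f ω)) = f := by
    funext ω
    field_simp
  rw [he] at h2
  calc c * pFun 𝓑 f ≤ c * (c⁻¹ * pFun 𝓑 (fun ω => c * f ω)) :=
        mul_le_mul_of_nonneg_left h2 hc.le
    _ = pFun 𝓑 (fun ω => c * f ω) := by field_simp

end KelleyAux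
end Chunk4
section Chunk5
namespace KelleyAux
open Set
variable {Ω : Type*} [Nonempty Ω]

omit [Nonempty Ω] in
lemma ind_mem_Bdd (A : Set Ω) : ind A ∈ Bdd Ω :=
  ⟨1, fun ω => abs_le.2 ⟨by linarith [ind_nonneg A ω], ind_le_one A ω⟩⟩

lemma exists_good_measure {𝓑 : Set (Set Ω)} (hne : 𝓑.Nonempty) :
    ∃ m : Set Ω → ℝ, (∀ A, 0 ≤ m A) ∧ m Set.univ = 1 ∧
      (∀ A B : Set Ω, Disjoint A B → m (A ∪ B) = m A + m B) ∧
      ∀ B ∈ 𝓑, interNum 𝓑 ≤ m B := by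
  classical
  set I := interNum 𝓑 with hIdef
  -- the sublinear functional
  set N : Bdd Ω → ℝ := fun x => pFun 𝓑 x.1 with hN
  have N_hom : ∀ c : ℝ, 0 < c → ∀ x : Bdd Ω, N (c • x) = c * N x := by
    intro c hc x
    obtain ⟨C, hC⟩ := x.2
    have hcoe : ((c • x : Bdd Ω) : Ω → ℝ) = fun ω => c * (x : Ω → ℝ) ω := rfl
    rw [hN]
    simp only [hcoe]
    exact pFun_smul hne _ hc hC
  have N_add : ∀ x y : Bdd Ω, N (x + y) ≤ N x + N y := by
    intro x y
    obtain ⟨C, hC⟩ := x.2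
    obtain ⟨D, hD⟩ := y.2
    have hcoe : ((x + y : Bdd Ω) : Ω → ℝ) = (x : Ω → ℝ) + (y : Ω → ℝ) := rfl
    rw [hN]
    simp only [hcoe]
    exact pFun_add hne hC hD
  have hf : ∀ x : ((⟨⊥, 0⟩ : (Bdd Ω) →ₗ.[ℝ] ℝ)).domain,
      (⟨⊥, 0⟩ : (Bdd Ω) →ₗ.[ℝ] ℝ) x ≤ N x := by
    rintro ⟨x, hx⟩
    have hx0 : x = 0 := Submodule.mem_bot ℝ |>.1 hx
    subst hx0
    show (0 : ℝ) ≤ N 0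
    have : ((0 : Bdd Ω) : Ω → ℝ) = fun _ => (0:ℝ) := rfl
    rw [hN]
    simp only [this]
    have := pFun_lb hne (f := fun _ : Ω => (0:ℝ)) (C := 0) (fun ω => by simp)
    simpa using this
  obtain ⟨L, -, hL⟩ := exists_extension_of_le_sublinear (⟨⊥, 0⟩ : (Bdd Ω) →ₗ.[ℝ] ℝ) N N_hom N_add hf
  -- the measure
  set xA : Set Ω → Bdd Ω := fun A => ⟨ind A, ind_mem_Bdd A⟩ with hxA
  refine ⟨fun A => L (xA A), ?_, ?_, ?_, ?_⟩
  · -- nonneg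
    intro A
    have h1 : L (-(xA A)) ≤ pFun 𝓑 (fun ω => -(ind A ω)) := by
      have := hL (-(xA A))
      rwa [hN] at this
    have h2 : pFun 𝓑 (fun ω => -(ind A ω)) ≤ ⨆ ω, -(ind A ω) :=
      pFun_le_sup hne (C := 1) fun ω => by
        rw [abs_neg]; exact abs_le.2 ⟨by linarith [ind_nonneg A ω], ind_le_one A ω⟩
    have h3 : (⨆ ω, -(ind A ω)) ≤ 0 := ciSup_le fun ω => neg_nonpos.2 (ind_nonneg A ω)
    have h4 : L (-(xA A)) = -L (xA A) := map_neg L _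
    linarith
  · -- univ
    have hu : ∀ ω, ind (Set.univ : Set Ω) ω = 1 := fun ω => by simp [ind]
    have h1 : L (xA Set.univ) ≤ 1 := by
      have := (hL (xA Set.univ)).trans
        (pFun_le_sup hne (C := 1) fun ω => by
          show |ind (Set.univ : Set Ω) ω| ≤ 1
          rw [hu ω]; simp)
      calc L (xA Set.univ) ≤ ⨆ ω, ind (Set.univ : Set Ω) ω := this
        _ = 1 := by simp only [hu]; exact ciSup_const
    have h2 : L (-(xA Set.univ)) ≤ -1 := by
      have hle := (hL (-(xA Set.univ)))
      rw [hN] at hle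
      have h2' : pFun 𝓑 (fun ω => -(ind (Set.univ : Set Ω) ω)) ≤ ⨆ ω, -(ind (Set.univ : Set Ω) ω) :=
        pFun_le_sup hne (C := 1) fun ω => by rw [hu ω]; simp
      have h3' : (⨆ ω, -(ind (Set.univ : Set Ω) ω)) = -1 := by
        simp only [hu]; exact ciSup_const
      calc L (-(xA Set.univ)) ≤ pFun 𝓑 (fun ω => -(ind (Set.univ : Set Ω) ω)) := hle
        _ ≤ -1 := by rw [← h3']; exact h2'
    have h4 : L (-(xA Set.univ)) = -L (xA Set.univ) := map_neg L _
    linarith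
  · -- additive
    intro A B hAB
    show L (xA (A ∪ B)) = L (xA A) + L (xA B)
    have hsum : xA (A ∪ B) = xA A + xA B := by
      apply Subtype.ext
      show ind (A ∪ B) = ind A + ind B
      unfold ind
      exact Set.indicator_union_of_disjoint hAB _
    rw [hsum, map_add]
  · -- ≥ I on 𝓑
    intro B hB
    have hmem : (-I) ∈ PSet 𝓑 (fun ω => -(ind B ω)) := by
      refine ⟨[(1, B)], fun q hq => ?_, ?_⟩
      · simp at hq; rw [hq]; exact ⟨zero_le_one, hB⟩
      · have hzero : (fun ω => (-(ind B ω) + hRep [((1:ℝ), B)] ω)) = fun _ => (0:ℝ) := by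
          funext ω; simp [hRep]
        have hm1 : massRep [((1:ℝ), B)] = 1 := by simp [massRep]
        rw [hm1]
        calc (-I) = (⨆ _ : Ω, (0:ℝ)) - 1 * I := by rw [ciSup_const]; ring
          _ = (⨆ ω, (-(ind B ω) + hRep [((1:ℝ), B)] ω)) - 1 * I := by rw [hzero]
    have hCneg : ∀ ω, |(fun ω => -(ind B ω)) ω| ≤ 1 := fun ω => by
      rw [abs_neg]; exact abs_le.2 ⟨by linarith [ind_nonneg B ω], ind_le_one B ω⟩
    have h1 : pFun 𝓑 (fun ω => -(ind B ω)) ≤ -I :=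
      csInf_le (pFun_bddBelow hne hCneg) hmem
    have h2 : L (-(xA B)) ≤ pFun 𝓑 (fun ω => -(ind B ω)) := by
      have := hL (-(xA B)); rwa [hN] at this
    have h4 : L (-(xA B)) = -L (xA B) := map_neg L _
    linarith

end KelleyAux
end Chunk5
section Chunk6
namespace KelleyAux
open Set
variable {Ω : Type*}

def listUnion : List (Set Ω) → Set Ω
  | [] => ∅
  | B :: l => B ∪ listUnion l

def excess : List (Set Ω) → List (Set Ω)
  | [] => []
  | B :: l => (B ∩ listUnion l) :: excess l

lemma subset_listUnion {β : List (Set Ω)} {B : Set Ω} (h : B ∈ β) : B ⊆ listUnion β := by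
  induction β with
  | nil => simp at h
  | cons A l ih =>
    rcases List.mem_cons.1 h with rfl | h
    · exact Set.subset_union_left
    · exact (ih h).trans Set.subset_union_right

section Algebra
variable {𝒜 : Set (Set Ω)} {m : Set Ω → ℝ}

lemma inter_mem_algebra (h𝒜 : IsSetAlgebra 𝒜) {A B : Set Ω} (hA : A ∈ 𝒜) (hB : B ∈ 𝒜) : A ∩ B ∈ 𝒜 := by
  have h1 : Aᶜ ∪ Bᶜ ∈ 𝒜 := h𝒜.2.2.2 _ (h𝒜.2.2.1 A hA) _ (h𝒜.2.2.1 B hB)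
  have h2 : (Aᶜ ∪ Bᶜ)ᶜ ∈ 𝒜 := h𝒜.2.2.1 _ h1
  rwa [Set.compl_union, compl_compl, compl_compl] at h2

lemma diff_mem_algebra (h𝒜 : IsSetAlgebra 𝒜) {A B : Set Ω} (hA : A ∈ 𝒜) (hB : B ∈ 𝒜) : A \ B ∈ 𝒜 := by
  have := inter_mem_algebra h𝒜 hA (h𝒜.2.2.1 B hB)
  rwa [Set.diff_eq]

lemma listUnion_mem_algebra (h𝒜 : IsSetAlgebra 𝒜) {β : List (Set Ω)} (hβ : ∀ B ∈ β, B ∈ 𝒜) :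
    listUnion β ∈ 𝒜 := by
  induction β with
  | nil => exact h𝒜.1
  | cons A l ih =>
    exact h𝒜.2.2.2 _ (hβ A (by simp)) _ (ih fun B hB => hβ B (by simp [hB]))

lemma excess_mem_algebra (h𝒜 : IsSetAlgebra 𝒜) {β : List (Set Ω)} (hβ : ∀ B ∈ β, B ∈ 𝒜) :
    ∀ C ∈ excess β, C ∈ 𝒜 := by
  induction β with
  | nil => simp [excess]
  | cons A l ih =>
    intro C hC
    rcases List.mem_cons.1 hC with rfl | hC
    · exact inter_mem_algebra h𝒜 (hβ A (by simp))
        (listUnion_mem_algebra h𝒜 fun B hB => hβ B (by simp [hB]))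
    · exact ih (fun B hB => hβ B (by simp [hB])) C hC

lemma m_empty (h𝒜 : IsSetAlgebra 𝒜) (hm : IsFAProb 𝒜 m) : m ∅ = 0 := by
  have := hm.2.2 ∅ h𝒜.1 ∅ h𝒜.1 (by simp)
  simp at this
  linarith

lemma m_le_one (h𝒜 : IsSetAlgebra 𝒜) (hm : IsFAProb 𝒜 m) {A : Set Ω} (hA : A ∈ 𝒜) : m A ≤ 1 := by
  have hAc : Aᶜ ∈ 𝒜 := h𝒜.2.2.1 A hA
  have hadd := hm.2.2 A hA Aᶜ hAc disjoint_compl_right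
  rw [Set.union_compl_self] at hadd
  have h0 : 0 ≤ m Aᶜ := hm.1 Aᶜ hAc
  have h1 := hm.2.1
  linarith

lemma m_modular (h𝒜 : IsSetAlgebra 𝒜) (hm : IsFAProb 𝒜 m) {A B : Set Ω} (hA : A ∈ 𝒜) (hB : B ∈ 𝒜) :
    m (A ∪ B) + m (A ∩ B) = m A + m B := by
  have hdiff : A \ B ∈ 𝒜 := diff_mem_algebra h𝒜 hA hB
  have hint : A ∩ B ∈ 𝒜 := inter_mem_algebra h𝒜 hA hB
  have e1 : m (A ∪ B) = m (A \ B) + m B := by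
    have hd : Disjoint (A \ B) B := disjoint_sdiff_left
    have hu : (A \ B) ∪ B = A ∪ B := Set.diff_union_self
    rw [← hu]
    exact hm.2.2 _ hdiff _ hB hd
  have e2 : m A = m (A \ B) + m (A ∩ B) := by
    have hd : Disjoint (A \ B) (A ∩ B) :=
      disjoint_sdiff_left.mono_right Set.inter_subset_right
    have hu : (A \ B) ∪ (A ∩ B) = A := Set.diff_union_inter A B
    have := hm.2.2 _ hdiff _ hint hd
    rwa [hu] at this
  linarith

lemma sum_m_eq (h𝒜 : IsSetAlgebra 𝒜) (hm : IsFAProb 𝒜 m) {β : List (Set Ω)} (hβ : ∀ B ∈ β, B ∈ 𝒜) :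
    (β.map m).sum = m (listUnion β) + ((excess β).map m).sum := by
  induction β with
  | nil => simp [listUnion, excess, m_empty h𝒜 hm]
  | cons A l ih =>
    have hl : ∀ B ∈ l, B ∈ 𝒜 := fun B hB => hβ B (by simp [hB])
    have hA : A ∈ 𝒜 := hβ A (by simp)
    have hU : listUnion l ∈ 𝒜 := listUnion_mem_algebra h𝒜 hl
    have hmod := m_modular h𝒜 hm hA hU
    show m A + (l.map m).sum = m (A ∪ listUnion l) + (m (A ∩ listUnion l) + ((excess l).map m).sum)
    rw [ih hl]
    linarith

end Algebra

lemma cnt_excess_eq (β : List (Set Ω)) (ω : Ω) :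
    cnt β ω = ind (listUnion β) ω + cnt (excess β) ω := by
  induction β with
  | nil => simp [cnt, listUnion, excess, ind]
  | cons A l ih =>
    have key : ind A ω + ind (listUnion l) ω =
        ind (A ∪ listUnion l) ω + ind (A ∩ listUnion l) ω := by
      by_cases h1 : ω ∈ A <;> by_cases h2 : ω ∈ listUnion l <;>
        simp [ind_of_mem, ind_of_not_mem, h1, h2, Set.mem_union, Set.mem_inter_iff,
          ind, Set.indicator_apply]
    show ind A ω + cnt l ω = ind (A ∪ listUnion l) ω + (ind (A ∩ listUnion l) ω + cnt (excess l) ω)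
    rw [ih]
    linarith

lemma count_bound {𝒜 : Set (Set Ω)} (h𝒜 : IsSetAlgebra 𝒜) {m : Set Ω → ℝ}
    (hm : IsFAProb 𝒜 m) :
    ∀ (j : ℕ) (β : List (Set Ω)), (∀ B ∈ β, B ∈ 𝒜) → (∀ ω, cnt β ω ≤ (j : ℝ)) →
      (β.map m).sum ≤ (j : ℝ) := by
  intro j
  induction j with
  | zero =>
    intro β hβ hcnt
    have hzero : ∀ B ∈ β, m B = 0 := by
      intro B hB
      have hBempty : B = ∅ := by
        by_contra h
        obtain ⟨ω, hω⟩ := Set.nonempty_iff_ne_empty.2 h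
        have h1 : ind B ω ≤ cnt β ω := by
          apply List.single_le_sum
          · intro x hx
            obtain ⟨B', _, rfl⟩ := List.mem_map.1 hx
            exact ind_nonneg B' ω
          · exact List.mem_map.2 ⟨B, hB, rfl⟩
        rw [ind_of_mem hω] at h1
        have := hcnt ω
        simp at this
        linarith
      rw [hBempty]
      exact m_empty h𝒜 hm
    have : (β.map m).sum = 0 := by
      apply List.sum_eq_zero
      intro x hx
      obtain ⟨B, hB, rfl⟩ := List.mem_map.1 hx
      exact hzero B hB
    simp [this]
  | succ j ih =>
    intro β hβ hcnt
    have hU : listUnion β ∈ 𝒜 := listUnion_mem_algebra h𝒜 hβ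
    have hex : ∀ C ∈ excess β, C ∈ 𝒜 := excess_mem_algebra h𝒜 hβ
    have hcnt' : ∀ ω, cnt (excess β) ω ≤ (j : ℝ) := by
      intro ω
      have heq := cnt_excess_eq β ω
      by_cases hω : ω ∈ listUnion β
      · rw [ind_of_mem hω] at heq
        have := hcnt ω
        push_cast at this ⊢
        linarith
      · have hcnt0 : cnt β ω = 0 := by
          apply List.sum_eq_zero
          intro x hx
          obtain ⟨B, hB, rfl⟩ := List.mem_map.1 hx
          exact ind_of_not_mem fun h => hω (subset_listUnion hB h)
        rw [ind_of_not_mem hω] at heq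
        have h0 : (0:ℝ) ≤ j := Nat.cast_nonneg j
        linarith
    have hsum := sum_m_eq h𝒜 hm hβ
    have hIH := ih (excess β) hex hcnt'
    have hU1 : m (listUnion β) ≤ 1 := m_le_one h𝒜 hm hU
    push_cast
    linarith

end KelleyAux
end Chunk6
section Chunk7
namespace KelleyAux
open Set
variable {Ω : Type*} [Nonempty Ω]

lemma sInf_image_le_SSet {𝒜 : Set (Set Ω)} (h𝒜 : IsSetAlgebra 𝒜) {m : Set Ω → ℝ}
    (hm : IsFAProb 𝒜 m) {𝓑 : Set (Set Ω)} (h𝓑 : 𝓑 ⊆ 𝒜 \ {∅}) {s : ℝ}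
    (hs : s ∈ SSet 𝓑) : sInf (m '' 𝓑) ≤ s := by
  obtain ⟨β, hβne, hβ𝓑, rfl⟩ := hs
  have hβ𝒜 : ∀ B ∈ β, B ∈ 𝒜 := fun B hB => (h𝓑 (hβ𝓑 B hB)).1
  have hn : 0 < β.length := List.length_pos_iff.2 hβne
  have hnR : (0:ℝ) < β.length := by exact_mod_cast hn
  set s := ⨆ ω, sFun β ω with hsdef
  have hbddB : BddBelow (m '' 𝓑) := by
    refine ⟨0, ?_⟩
    rintro _ ⟨B, hB, rfl⟩
    exact hm.1 B (h𝓑 hB).1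
  have hsω : ∀ ω, sFun β ω ≤ s := fun ω => le_ciSup (bddAbove_of_le (sFun_le_one β)) ω
  have hs0 : 0 ≤ s := by
    obtain ⟨ω⟩ := ‹Nonempty Ω›
    exact (sFun_nonneg β ω).trans (hsω ω)
  have hcnt : ∀ ω, cnt β ω ≤ (β.length : ℝ) * s := by
    intro ω
    have : cnt β ω = (β.length : ℝ) * sFun β ω := by
      rw [sFun_eq]; field_simp
    rw [this]
    exact mul_le_mul_of_nonneg_left (hsω ω) hnR.le
  set j := ⌊(β.length : ℝ) * s⌋₊ with hjdef
  have hj : ∀ ω, cnt β ω ≤ (j : ℝ) := by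
    intro ω
    obtain ⟨k, hk⟩ := cnt_nat β ω
    rw [hk]
    have hkle : (k:ℝ) ≤ (β.length : ℝ) * s := hk ▸ hcnt ω
    exact_mod_cast Nat.le_floor hkle
  have hms : (β.map m).sum ≤ (j : ℝ) := count_bound h𝒜 hm j β hβ𝒜 hj
  have hjns : (j:ℝ) ≤ (β.length : ℝ) * s := Nat.floor_le (mul_nonneg hnR.le hs0)
  have hlow : (β.length : ℝ) * sInf (m '' 𝓑) ≤ (β.map m).sum := by
    have h1 : ∀ B ∈ β, sInf (m '' 𝓑) ≤ m B := fun B hB =>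
      csInf_le hbddB ⟨B, hβ𝓑 B hB, rfl⟩
    have h2 : ((β.map fun _ => sInf (m '' 𝓑)).sum) ≤ (β.map m).sum :=
      List.sum_le_sum h1
    have h3 : (β.map fun _ => sInf (m '' 𝓑)).sum = (β.length : ℝ) * sInf (m '' 𝓑) := by
      rw [List.map_const', List.sum_replicate, nsmul_eq_mul]
    linarith
  have : (β.length : ℝ) * sInf (m '' 𝓑) ≤ (β.length : ℝ) * s := by linarith
  exact le_of_mul_le_mul_left this hnR

end KelleyAux
end Chunk7

/-- **Minimax identity for intersection numbers.** For every nonempty family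
`𝓑 ⊆ 𝒜₊`, `I(𝓑) = sup over finitely additive probabilities m on 𝒜 of inf_{B ∈ 𝓑} m(B)`. -/
theorem interNum_eq_sSup_sInf {Ω : Type*} [Nonempty Ω] (𝒜 : Set (Set Ω))
    (h𝒜 : IsSetAlgebra 𝒜) (𝓑 : Set (Set Ω)) (h𝓑 : 𝓑 ⊆ 𝒜 \ {∅})
    (hne : 𝓑.Nonempty) :
    interNum 𝓑 =
      sSup {r | ∃ m : Set Ω → ℝ, IsFAProb 𝒜 m ∧ r = sInf (m '' 𝓑)} := by
  classical
  set T := {r | ∃ m : Set Ω → ℝ, IsFAProb 𝒜 m ∧ r = sInf (m '' 𝓑)} with hT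
  obtain ⟨m₀, h0, h1, h2, h3⟩ := KelleyAux.exists_good_measure (𝓑 := 𝓑) hne
  have hm₀ : IsFAProb 𝒜 m₀ := ⟨fun A _ => h0 A, h1, fun A _ B _ hd => h2 A B hd⟩
  have hr₀T : sInf (m₀ '' 𝓑) ∈ T := ⟨m₀, hm₀, rfl⟩
  have hr₀ : interNum 𝓑 ≤ sInf (m₀ '' 𝓑) := by
    apply le_csInf (hne.image m₀)
    rintro _ ⟨B, hB, rfl⟩
    exact h3 B hB
  have hTbdd : BddAbove T := by
    refine ⟨1, ?_⟩
    rintro r ⟨m, hm, rfl⟩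
    obtain ⟨B₀, hB₀⟩ := hne
    have hbddB : BddBelow (m '' 𝓑) := by
      refine ⟨0, ?_⟩
      rintro _ ⟨B, hB, rfl⟩
      exact hm.1 B (h𝓑 hB).1
    exact (csInf_le hbddB ⟨B₀, hB₀, rfl⟩).trans
      (KelleyAux.m_le_one h𝒜 hm (h𝓑 hB₀).1)
  apply le_antisymm
  · exact hr₀.trans (le_csSup hTbdd hr₀T)
  · apply csSup_le ⟨_, hr₀T⟩
    rintro r ⟨m, hm, rfl⟩
    rw [KelleyAux.interNum_eq]
    apply le_csInf (KelleyAux.SSet_nonempty hne)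
    intro s hs
    exact KelleyAux.sInf_image_le_SSet h𝒜 hm h𝓑 hs
end

section
/- Representation of monotone sublinear functionals: if π is a monotone, sublinear functional on L(𝒜), then for every f ∈ L(𝒜), π(f) = sup over m ∈ ba(𝒜,π)₊ of ∫ f dm, where ba(𝒜,π)₊ is the set of finitely additive nonnegative set functions m on 𝒜 with ∫ h dm ≤ π(h) for all h ∈ L(𝒜). In particular the supremum is over a nonempty set. -/
/-- `L(𝒜)`: the linear span of the indicators of sets in `𝒜`. -/
def LSpan {Ω : Type*} (𝒜 : Set (Set Ω)) : Submodule ℝ (Ω → ℝ) :=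
  Submodule.span ℝ {f | ∃ A ∈ 𝒜, f = A.indicator fun _ => (1 : ℝ)}

/-- `π` is monotone on `L(𝒜)`. -/
def MonotoneOnL {Ω : Type*} (𝒜 : Set (Set Ω)) (π : (Ω → ℝ) → ℝ) : Prop :=
  ∀ f ∈ LSpan 𝒜, ∀ g ∈ LSpan 𝒜, f ≤ g → π f ≤ π g

/-- `π` is sublinear on `L(𝒜)`: subadditive and positively homogeneous. -/
def SublinearOnL {Ω : Type*} (𝒜 : Set (Set Ω)) (π : (Ω → ℝ) → ℝ) : Prop :=
  (∀ f ∈ LSpan 𝒜, ∀ g ∈ LSpan 𝒜, π (f + g) ≤ π f + π g) ∧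
    ∀ c : ℝ, 0 ≤ c → ∀ f ∈ LSpan 𝒜, π (c • f) = c * π f

/-- A nonnegative finitely additive set function on the algebra `𝒜`. -/
def IsFANonneg {Ω : Type*} (𝒜 : Set (Set Ω)) (m : Set Ω → ℝ) : Prop :=
  (∀ A ∈ 𝒜, 0 ≤ m A) ∧ m ∅ = 0 ∧
    ∀ A ∈ 𝒜, ∀ B ∈ 𝒜, Disjoint A B → m (A ∪ B) = m A + m B

/-- `𝒩(π) = {A ∈ 𝒜 : π(1_A) = 0}`. -/
def NullPi {Ω : Type*} (𝒜 : Set (Set Ω)) (π : (Ω → ℝ) → ℝ) : Set (Set Ω) :=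
  {A ∈ 𝒜 | π (A.indicator fun _ => (1 : ℝ)) = 0}

/-- `m` is `π`-dominated: `m(A) ≤ π(1_A)` for all `A ∈ 𝒜`. -/
def PiDominated {Ω : Type*} (𝒜 : Set (Set Ω)) (π : (Ω → ℝ) → ℝ) (m : Set Ω → ℝ) : Prop :=
  ∀ A ∈ 𝒜, m A ≤ π (A.indicator fun _ => (1 : ℝ))

/-- `m` is strictly `π`-positive: `𝒩(m) ⊆ 𝒩(π)`. -/
def StrictlyPiPositive {Ω : Type*} (𝒜 : Set (Set Ω)) (π : (Ω → ℝ) → ℝ) (m : Set Ω → ℝ) : Prop :=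
  ∀ A ∈ 𝒜, m A = 0 → π (A.indicator fun _ => (1 : ℝ)) = 0

/-- `I_π(𝓑) = inf over nonempty finite sequences β from 𝓑 of π(s(β))`. -/
noncomputable def interNumPi {Ω : Type*} (π : (Ω → ℝ) → ℝ) (𝓑 : Set (Set Ω)) : ℝ :=
  sInf {r | ∃ β : List (Set Ω), β ≠ [] ∧ (∀ B ∈ β, B ∈ 𝓑) ∧ r = π (sFun β)}

/-- The elementary integral `∫ f dm = Σ_y y · m(f⁻¹{y})` of a function with finite
range with respect to a finitely additive set function `m`. For `f = Σᵢ aᵢ 1_{Aᵢ}`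
in `L(𝒜)` and finitely additive `m` this equals `Σᵢ aᵢ m(Aᵢ)`. -/
noncomputable def faIntegral {Ω : Type*} (m : Set Ω → ℝ) (f : Ω → ℝ) : ℝ :=
  ∑ᶠ y : ℝ, y * m (f ⁻¹' {y})

/-- `ba(𝒜,π)₊`: nonnegative finitely additive set functions on `𝒜` dominated by `π`
on all of `L(𝒜)`. -/
def baPos {Ω : Type*} (𝒜 : Set (Set Ω)) (π : (Ω → ℝ) → ℝ) : Set (Set Ω → ℝ) :=
  {m | IsFANonneg 𝒜 m ∧ ∀ h ∈ LSpan 𝒜, faIntegral m h ≤ π h}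

/-! By Hahn–Banach, for each `f ∈ L(𝒜)` there is a linear functional `G ≤ π` on `L(𝒜)` with
`G f = π f`, and monotonicity of `π` makes `G` positive. Extended linearly to all functions on `Ω`,
`G` yields the finitely additive set function `A ↦ G 1_A`, whose elementary integral recovers `G`
on every function with finite range; it therefore lies in `ba(𝒜,π)₊` and attains `π f`. -/

open Set

section Sublinear

variable {E : Type*} [AddCommGroup E] [Module ℝ E]

theorem exists_linearMap_le_sublinear_apply_eq (N : E → ℝ)
    (N_hom : ∀ c : ℝ, 0 < c → ∀ x, N (c • x) = c * N x)
    (N_add : ∀ x y, N (x + y) ≤ N x + N y) (x : E) :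
    ∃ g : E →ₗ[ℝ] ℝ, (∀ y, g y ≤ N y) ∧ g x = N x := by
  have N_zero : N 0 = 0 := by
    have := N_hom 2 two_pos 0
    rw [smul_zero] at this
    linarith
  have mul_le : ∀ c : ℝ, c * N x ≤ N (c • x) := by
    intro c
    rcases le_or_gt c 0 with hc | hc
    -- for `c < 0`, subadditivity on `c • x + (-c) • x = 0`
    · have h := N_add (c • x) ((-c) • x)
      rcases hc.lt_or_eq with hc | rfl
      · rw [← add_smul, add_neg_cancel, zero_smul, N_zero, N_hom _ (neg_pos.2 hc)] at h
        linarith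
      · simp [N_zero]
    · rw [N_hom c hc]
  have H : ∀ c : ℝ, c • x = 0 → (RingHom.id ℝ) c • N x = 0 := by
    intro c hcx
    rcases smul_eq_zero.1 hcx with rfl | rfl
    · simp
    · simp [N_zero]
  obtain ⟨g, hgF, hgN⟩ := exists_extension_of_le_sublinear (LinearPMap.mkSpanSingleton' x (N x) H)
    N N_hom N_add (by
      rintro ⟨y, hy⟩
      obtain ⟨c, rfl⟩ := Submodule.mem_span_singleton.1 hy
      rw [LinearPMap.mkSpanSingleton'_apply]
      exact mul_le c)
  exact ⟨g, hgN, (hgF ⟨x, Submodule.mem_span_singleton_self x⟩).trans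
    (LinearPMap.mkSpanSingleton'_apply_self _ _ _ _)⟩

end Sublinear

section SetFunction

variable {Ω : Type*}

noncomputable def LinearMap.setFunction (G : (Ω → ℝ) →ₗ[ℝ] ℝ) (A : Set Ω) : ℝ :=
  G (A.indicator fun _ => 1)

@[simp]
theorem LinearMap.setFunction_empty (G : (Ω → ℝ) →ₗ[ℝ] ℝ) : G.setFunction ∅ = 0 := by
  rw [LinearMap.setFunction, indicator_empty', map_zero]

theorem sum_smul_indicator_preimage_singleton {f : Ω → ℝ} (hf : (range f).Finite) :
    ∑ y ∈ hf.toFinset, y • (f ⁻¹' {y}).indicator (fun _ => (1 : ℝ)) = f := by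
  ext ω
  rw [Finset.sum_apply, Finset.sum_eq_single_of_mem (f ω) (by simp)]
  · simp
  · intro y _ hy
    simp [Ne.symm hy]

theorem faIntegral_setFunction (G : (Ω → ℝ) →ₗ[ℝ] ℝ) {f : Ω → ℝ} (hf : (range f).Finite) :
    faIntegral G.setFunction f = G f := by
  have hsupp : (Function.support fun y : ℝ => y * G.setFunction (f ⁻¹' {y})) ⊆ hf.toFinset := by
    intro y hy
    by_contra hyf
    rw [Finite.coe_toFinset, ← preimage_singleton_eq_empty] at hyf
    simp [hyf] at hy
  rw [faIntegral, finsum_eq_finsetSum_of_support_subset _ hsupp]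
  conv_rhs => rw [← sum_smul_indicator_preimage_singleton hf]
  simp [LinearMap.setFunction, map_sum]

theorem isFANonneg_setFunction {𝒜 : Set (Set Ω)} (G : (Ω → ℝ) →ₗ[ℝ] ℝ)
    (hG : ∀ A ∈ 𝒜, 0 ≤ G.setFunction A) : IsFANonneg 𝒜 G.setFunction := by
  refine ⟨hG, G.setFunction_empty, fun A _ B _ hAB => ?_⟩
  rw [LinearMap.setFunction, indicator_union_of_disjoint hAB]
  exact map_add G _ _

end SetFunction

section Representation

variable {Ω : Type*} {𝒜 : Set (Set Ω)} {π : (Ω → ℝ) → ℝ}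

theorem finite_range_of_mem_LSpan {f : Ω → ℝ} (hf : f ∈ LSpan 𝒜) : (range f).Finite := by
  induction hf using Submodule.span_induction with
  | mem f hf =>
    obtain ⟨A, -, rfl⟩ := hf
    refine (toFinite {0, 1}).subset ?_
    rintro _ ⟨ω, rfl⟩
    by_cases hω : ω ∈ A <;> simp [hω]
  | zero => exact finite_range_const
  | add f g _ _ hf hg =>
    refine (hf.image2 (· + ·) hg).subset ?_
    rintro _ ⟨ω, rfl⟩
    exact mem_image2_of_mem (mem_range_self ω) (mem_range_self ω)
  | smul c f _ hf => exact range_comp (c • ·) f ▸ hf.image _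

theorem SublinearOnL.map_zero (hsub : SublinearOnL 𝒜 π) : π 0 = 0 := by
  simpa using hsub.2 0 le_rfl 0 (LSpan 𝒜).zero_mem

theorem SublinearOnL.exists_linearMap_le_apply_eq (hsub : SublinearOnL 𝒜 π) {f : Ω → ℝ}
    (hf : f ∈ LSpan 𝒜) :
    ∃ G : (Ω → ℝ) →ₗ[ℝ] ℝ, (∀ h ∈ LSpan 𝒜, G h ≤ π h) ∧ G f = π f := by
  obtain ⟨g, hgπ, hgf⟩ := exists_linearMap_le_sublinear_apply_eq (fun h : LSpan 𝒜 => π h)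
    (fun c hc h => hsub.2 c hc.le h h.2) (fun h k => hsub.1 h h.2 k k.2) ⟨f, hf⟩
  obtain ⟨G, hG⟩ := g.exists_extend
  refine ⟨G, fun h hh => ?_, ?_⟩
  · exact (congrArg (· ⟨h, hh⟩) hG).trans_le (hgπ ⟨h, hh⟩)
  · exact (congrArg (· ⟨f, hf⟩) hG).trans hgf

theorem MonotoneOnL.linearMap_nonneg_of_le (hmono : MonotoneOnL 𝒜 π) (hπ : π 0 = 0)
    {G : (Ω → ℝ) →ₗ[ℝ] ℝ} (hG : ∀ h ∈ LSpan 𝒜, G h ≤ π h) {h : Ω → ℝ} (hh : h ∈ LSpan 𝒜)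
    (h_nonneg : 0 ≤ h) : 0 ≤ G h := by
  have hneg : -h ∈ LSpan 𝒜 := (LSpan 𝒜).neg_mem hh
  have : -G h ≤ 0 := calc
    -G h = G (-h) := (map_neg G h).symm
    _ ≤ π (-h) := hG _ hneg
    _ ≤ π 0 := hmono _ hneg _ (LSpan 𝒜).zero_mem (neg_nonpos.2 h_nonneg)
    _ = 0 := hπ
  linarith

theorem exists_mem_baPos_faIntegral_eq (hmono : MonotoneOnL 𝒜 π) (hsub : SublinearOnL 𝒜 π)
    {f : Ω → ℝ} (hf : f ∈ LSpan 𝒜) : ∃ m ∈ baPos 𝒜 π, faIntegral m f = π f := by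
  obtain ⟨G, hGπ, hGf⟩ := hsub.exists_linearMap_le_apply_eq hf
  have hG_nonneg : ∀ A ∈ 𝒜, 0 ≤ G.setFunction A := fun A hA =>
    hmono.linearMap_nonneg_of_le hsub.map_zero hGπ (Submodule.subset_span ⟨A, hA, rfl⟩)
      (indicator_nonneg fun _ _ => zero_le_one)
  refine ⟨G.setFunction, ⟨isFANonneg_setFunction G hG_nonneg, fun h hh => ?_⟩, ?_⟩
  · rw [faIntegral_setFunction G (finite_range_of_mem_LSpan hh)]
    exact hGπ h hh
  · rw [faIntegral_setFunction G (finite_range_of_mem_LSpan hf), hGf]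

end Representation

theorem pi_eq_sSup_integral_general {Ω : Type*} (𝒜 : Set (Set Ω))
    (π : (Ω → ℝ) → ℝ) (hmono : MonotoneOnL 𝒜 π)
    (hsub : SublinearOnL 𝒜 π) :
    (baPos 𝒜 π).Nonempty ∧
      ∀ f ∈ LSpan 𝒜, π f = sSup ((fun m => faIntegral m f) '' baPos 𝒜 π) := by
  refine ⟨?_, fun f hf => ?_⟩
  · obtain ⟨m, hm, -⟩ := exists_mem_baPos_faIntegral_eq hmono hsub (LSpan 𝒜).zero_mem
    exact ⟨m, hm⟩
  · obtain ⟨m, hm, hmf⟩ := exists_mem_baPos_faIntegral_eq hmono hsub hf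
    have hmax : IsGreatest ((fun m => faIntegral m f) '' baPos 𝒜 π) (π f) := by
      refine ⟨⟨m, hm, hmf⟩, ?_⟩
      rintro _ ⟨m', hm', rfl⟩
      exact hm'.2 f hf
    exact hmax.csSup_eq.symm

/-- **Representation of monotone sublinear functionals**: for every `f ∈ L(𝒜)`,
`π(f) = sup_{m ∈ ba(𝒜,π)₊} ∫ f dm`, the supremum being over a nonempty set. -/
theorem pi_eq_sSup_integral {Ω : Type*} [Nonempty Ω] (𝒜 : Set (Set Ω))
    (h𝒜 : IsSetAlgebra 𝒜) (π : (Ω → ℝ) → ℝ) (hmono : MonotoneOnL 𝒜 π)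
    (hsub : SublinearOnL 𝒜 π) :
    (baPos 𝒜 π).Nonempty ∧
      ∀ f ∈ LSpan 𝒜, π f = sSup ((fun m => faIntegral m f) '' baPos 𝒜 π) :=
  pi_eq_sSup_integral_general 𝒜 π hmono hsub
end

section
/- If π is a monotone, sublinear functional on L(𝒜), then the set ba(𝒜,π)₊ of finitely additive nonnegative set functions m on 𝒜 with ∫ h dm ≤ π(h) for all h ∈ L(𝒜) is convex, and it is compact as a subset of the space of real-valued functions on 𝒜 equipped with the topology of pointwise convergence (the weak* topology). -/
/-- `ba(𝒜,π)₊` realized inside the product space `ℝ^(Set Ω)` (with the pointwise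
convergence topology): set functions are extended by `0` outside `𝒜`, which encodes
the space `ℝ^𝒜` of the statement. -/
def baPos' {Ω : Type*} (𝒜 : Set (Set Ω)) (π : (Ω → ℝ) → ℝ) : Set (Set Ω → ℝ) :=
  {m | IsFANonneg 𝒜 m ∧ (∀ A ∉ 𝒜, m A = 0) ∧ ∀ h ∈ LSpan 𝒜, faIntegral m h ≤ π h}

/-!
In the product topology the evaluations `m ↦ m A` are continuous linear functionals, and so is
`m ↦ ∫ h dm = ∑ y, y * m (h ⁻¹' {y})` for `h` of finite range once `m ∅ = 0`. Hence `ba(𝒜,π)₊` is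
an intersection of closed half-spaces and hyperplanes: it is closed and convex. Since
`0 ≤ m A ≤ π(1_A)` it lies in a product of compact intervals, so it is compact by Tychonoff.
-/

section
variable {Ω : Type*}

lemma range_finite_of_mem_LSpan {𝒜 : Set (Set Ω)} {h : Ω → ℝ} (hh : h ∈ LSpan 𝒜) :
    (Set.range h).Finite := by
  induction hh using Submodule.span_induction with
  | mem f hf =>
    obtain ⟨A, -, rfl⟩ := hf
    refine (Set.toFinite {0, 1}).subset ?_
    rintro _ ⟨ω, rfl⟩
    by_cases hω : ω ∈ A <;> simp [hω]
  | zero => exact (Set.finite_singleton 0).subset Set.range_const_subset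
  | add f g _ _ hf hg =>
    refine (hf.image2 (· + ·) hg).subset ?_
    rintro _ ⟨ω, rfl⟩
    exact Set.mem_image2_of_mem ⟨ω, rfl⟩ ⟨ω, rfl⟩
  | smul c f _ hf =>
    exact (hf.image (c • ·)).subset (Set.range_comp (c • ·) f).subset

noncomputable def simpleIntegralCLM (s : Finset ℝ) (h : Ω → ℝ) : (Set Ω → ℝ) →L[ℝ] ℝ :=
  ∑ y ∈ s, y • ContinuousLinearMap.proj (R := ℝ) (φ := fun _ => ℝ) (h ⁻¹' {y})

lemma simpleIntegralCLM_apply (s : Finset ℝ) (h : Ω → ℝ) (m : Set Ω → ℝ) :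
    simpleIntegralCLM s h m = ∑ y ∈ s, y * m (h ⁻¹' {y}) := by
  simp [simpleIntegralCLM]

lemma faIntegral_eq_simpleIntegralCLM {m : Set Ω → ℝ} (hm : m ∅ = 0) {h : Ω → ℝ}
    {s : Finset ℝ} (hs : Set.range h ⊆ s) : faIntegral m h = simpleIntegralCLM s h m := by
  rw [simpleIntegralCLM_apply]
  refine finsum_eq_finsetSum_of_support_subset _ fun y hy => hs ?_
  by_contra hy'
  rw [Function.mem_support, Set.preimage_singleton_eq_empty.2 hy', hm, mul_zero] at hy
  exact hy rfl

lemma faIntegral_indicator {m : Set Ω → ℝ} (hm : m ∅ = 0) (A : Set Ω) :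
    faIntegral m (A.indicator fun _ => (1 : ℝ)) = m A := by
  rw [faIntegral_eq_simpleIntegralCLM hm (s := {0, 1}), simpleIntegralCLM_apply]
  · simp only [Finset.mem_singleton, zero_ne_one, not_false_eq_true, Finset.sum_insert,
      zero_mul, Finset.sum_singleton, one_mul, zero_add]
    congr 1 with ω
    by_cases hω : ω ∈ A <;> simp [hω]
  · rintro _ ⟨ω, rfl⟩
    by_cases hω : ω ∈ A <;> simp [hω]

variable (𝒜 : Set (Set Ω)) (π : (Ω → ℝ) → ℝ)

lemma baPos'_eq_iInter : baPos' 𝒜 π =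
    {m | m ∅ = 0} ∩ (⋂ A ∈ 𝒜, {m | 0 ≤ m A}) ∩
      (⋂ A ∈ 𝒜, ⋂ B ∈ 𝒜, ⋂ _ : Disjoint A B, {m | m (A ∪ B) - (m A + m B) = 0}) ∩
      (⋂ A ∈ 𝒜ᶜ, {m | m A = 0}) ∩
      ⋂ (h) (hh : h ∈ LSpan 𝒜),
        {m | simpleIntegralCLM (range_finite_of_mem_LSpan hh).toFinset h m ≤ π h} := by
  ext m
  simp only [baPos', IsFANonneg, Set.mem_inter_iff, Set.mem_iInter, Set.mem_ofPred_eq,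
    Set.mem_compl_iff, sub_eq_zero]
  constructor
  · rintro ⟨⟨hpos, hempty, hadd⟩, hout, hint⟩
    refine ⟨⟨⟨⟨hempty, hpos⟩, hadd⟩, hout⟩, fun h hh => ?_⟩
    rw [← faIntegral_eq_simpleIntegralCLM hempty (Set.Finite.coe_toFinset _).superset]
    exact hint h hh
  · rintro ⟨⟨⟨⟨hempty, hpos⟩, hadd⟩, hout⟩, hint⟩
    refine ⟨⟨hpos, hempty, hadd⟩, hout, fun h hh => ?_⟩
    rw [faIntegral_eq_simpleIntegralCLM hempty (Set.Finite.coe_toFinset _).superset]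
    exact hint h hh

lemma convex_baPos' : Convex ℝ (baPos' 𝒜 π) := by
  rw [baPos'_eq_iInter]
  let ev (A : Set Ω) : (Set Ω → ℝ) →ₗ[ℝ] ℝ := LinearMap.proj A
  refine (((convex_hyperplane (ev ∅).isLinear 0).inter ?_).inter ?_).inter ?_ |>.inter ?_
  · exact convex_iInter₂ fun A _ => convex_halfSpace_ge (ev A).isLinear 0
  · refine convex_iInter₂ fun A _ => convex_iInter₂ fun B _ => convex_iInter fun _ => ?_
    exact convex_hyperplane (ev (A ∪ B) - (ev A + ev B)).isLinear 0
  · exact convex_iInter₂ fun A _ => convex_hyperplane (ev A).isLinear 0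
  · exact convex_iInter₂ fun _ _ => convex_halfSpace_le (LinearMap.isLinear _) _

lemma isClosed_baPos' : IsClosed (baPos' 𝒜 π) := by
  rw [baPos'_eq_iInter]
  refine (((isClosed_eq (continuous_apply ∅) continuous_const).inter ?_).inter ?_).inter ?_
    |>.inter ?_
  · exact isClosed_biInter fun A _ => isClosed_le continuous_const (continuous_apply A)
  · refine isClosed_biInter fun A _ => isClosed_biInter fun B _ => isClosed_iInter fun _ => ?_
    exact isClosed_eq (by fun_prop) continuous_const
  · exact isClosed_biInter fun A _ => isClosed_eq (continuous_apply A) continuous_const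
  · exact isClosed_iInter fun _ => isClosed_iInter fun _ =>
      isClosed_le (ContinuousLinearMap.continuous _) continuous_const

lemma baPos'_subset_pi :
    baPos' 𝒜 π ⊆ Set.univ.pi fun A => Set.Icc 0 |π (A.indicator fun _ => (1 : ℝ))| := by
  rintro m ⟨⟨hpos, hempty, -⟩, hout, hint⟩ A -
  by_cases hA : A ∈ 𝒜
  · have hdom := hint _ (Submodule.subset_span ⟨A, hA, rfl⟩)
    rw [faIntegral_indicator hempty] at hdom
    exact ⟨hpos A hA, hdom.trans (le_abs_self _)⟩
  · simp [hout A hA]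

end

theorem baPos_convex_isCompact_general {Ω : Type*} (𝒜 : Set (Set Ω))
    (π : (Ω → ℝ) → ℝ) :
    Convex ℝ (baPos' 𝒜 π) ∧ IsCompact (baPos' 𝒜 π) :=
  ⟨convex_baPos' 𝒜 π, (isCompact_univ_pi fun _ => isCompact_Icc).of_isClosed_subset
    (isClosed_baPos' 𝒜 π) (baPos'_subset_pi 𝒜 π)⟩

/-- For a monotone sublinear `π` on `L(𝒜)`, the set `ba(𝒜,π)₊` is convex and
compact in the topology of pointwise convergence on `𝒜` (the weak* topology). -/
theorem baPos_convex_isCompact {Ω : Type*} [Nonempty Ω] (𝒜 : Set (Set Ω))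
    (h𝒜 : IsSetAlgebra 𝒜) (π : (Ω → ℝ) → ℝ) (hmono : MonotoneOnL 𝒜 π)
    (hsub : SublinearOnL 𝒜 π) :
    Convex ℝ (baPos' 𝒜 π) ∧ IsCompact (baPos' 𝒜 π) :=
  baPos_convex_isCompact_general 𝒜 π
end

section
/- If π is a monotone, sublinear functional on L(𝒜) with π(1) ≥ 1 ≥ −π(−1), then the functional π̂ on L(𝒜) defined by π̂(f) = inf_{a∈ℝ} (π(a·1 + f) − a) is real-valued, monotone, sublinear, additive with respect to constants (π̂(f + c·1) = π̂(f) + c for all c ∈ ℝ), satisfies π̂(1) = 1 = −π̂(−1), and satisfies π̂(f) ≤ π(f) for all f ∈ L(𝒜). -/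
/-- `π̂(f) = inf_{a ∈ ℝ} (π(a·1 + f) - a)`. -/
noncomputable def piHat {Ω : Type*} (π : (Ω → ℝ) → ℝ) (f : Ω → ℝ) : ℝ :=
  ⨅ a : ℝ, (π ((fun _ => a) + f) - a)

private lemma ciInf_comp_surj' {G : ℝ → ℝ} {e : ℝ → ℝ} (he : Function.Surjective e) :
    (⨅ a : ℝ, G (e a)) = ⨅ a : ℝ, G a := by
  have h : Set.range (fun a => G (e a)) = Set.range G := by
    ext x
    constructor
    · rintro ⟨a, rfl⟩; exact ⟨e a, rfl⟩
    · rintro ⟨b, rfl⟩; obtain ⟨a, rfl⟩ := he b; exact ⟨a, rfl⟩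
  rw [iInf, iInf, h]

private lemma ciInf_shift' (G : ℝ → ℝ) (hb : BddBelow (Set.range G)) (c : ℝ) :
    (⨅ a : ℝ, (G (a + c) + c)) = (⨅ a : ℝ, G a) + c := by
  obtain ⟨m, hm⟩ := hb
  have hb'' : BddBelow (Set.range fun a : ℝ => G (a + c) + c) := by
    refine ⟨m + c, ?_⟩
    rintro x ⟨a, rfl⟩
    exact add_le_add_left (hm ⟨a + c, rfl⟩) c
  apply le_antisymm
  · rw [← sub_le_iff_le_add]
    apply le_ciInf
    intro a
    rw [sub_le_iff_le_add]
    have := ciInf_le hb'' (a - c)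
    simpa using this
  · apply le_ciInf
    intro a
    exact add_le_add_left (ciInf_le ⟨m, hm⟩ (a + c)) c

/-- If `π` is monotone and sublinear on `L(𝒜)` with `π(1) ≥ 1 ≥ -π(-1)`, then `π̂` is
real-valued (the infimum is over a set bounded below), monotone, sublinear, additive
with respect to constants, satisfies `π̂(1) = 1 = -π̂(-1)`, and `π̂ ≤ π` on `L(𝒜)`. -/
theorem piHat_properties {Ω : Type*} [Nonempty Ω] (𝒜 : Set (Set Ω))
    (h𝒜 : IsSetAlgebra 𝒜) (π : (Ω → ℝ) → ℝ) (hmono : MonotoneOnL 𝒜 π)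
    (hsub : SublinearOnL 𝒜 π) (h1 : 1 ≤ π (fun _ => (1 : ℝ)))
    (h2 : -π (fun _ => (-1 : ℝ)) ≤ 1) :
    (∀ f ∈ LSpan 𝒜, BddBelow (Set.range fun a : ℝ => π ((fun _ => a) + f) - a)) ∧
      MonotoneOnL 𝒜 (piHat π) ∧ SublinearOnL 𝒜 (piHat π) ∧
      (∀ f ∈ LSpan 𝒜, ∀ c : ℝ, piHat π (f + fun _ => c) = piHat π f + c) ∧
      piHat π (fun _ => (1 : ℝ)) = 1 ∧ piHat π (fun _ => (-1 : ℝ)) = -1 ∧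
      ∀ f ∈ LSpan 𝒜, piHat π f ≤ π f := by
  obtain ⟨-, huniv, -, -⟩ := h𝒜
  -- constants belong to the span
  have hone : (fun _ : Ω => (1 : ℝ)) ∈ LSpan 𝒜 := by
    have h : (Set.univ.indicator (fun _ => (1 : ℝ)) : Ω → ℝ) ∈ LSpan 𝒜 :=
      Submodule.subset_span ⟨Set.univ, huniv, rfl⟩
    simpa [Set.indicator_univ] using h
  have hconst : ∀ a : ℝ, (fun _ : Ω => a) ∈ LSpan 𝒜 := by
    intro a
    have e : (fun _ : Ω => a) = a • (fun _ : Ω => (1 : ℝ)) := by funext ω; simp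
    rw [e]; exact (LSpan 𝒜).smul_mem a hone
  have hmem : ∀ f ∈ LSpan 𝒜, ∀ a : ℝ, ((fun _ : Ω => a) + f) ∈ LSpan 𝒜 :=
    fun f hf a => (LSpan 𝒜).add_mem (hconst a) hf
  have hneg1 : -1 ≤ π (fun _ : Ω => (-1 : ℝ)) := by linarith
  -- `a ≤ π (a·1)` for all reals `a`
  have hpia : ∀ a : ℝ, a ≤ π (fun _ : Ω => a) := by
    intro a
    rcases le_total 0 a with ha | ha
    · have h := hsub.2 a ha _ hone
      have e : (a • fun _ : Ω => (1 : ℝ)) = fun _ : Ω => a := by funext ω; simp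
      rw [e] at h
      nlinarith
    · have h := hsub.2 (-a) (by linarith) _ (hconst (-1))
      have e : ((-a) • fun _ : Ω => (-1 : ℝ)) = fun _ : Ω => a := by funext ω; simp
      rw [e] at h
      nlinarith
  -- key lower bound
  have key : ∀ f ∈ LSpan 𝒜, ∀ a : ℝ, -π (-f) ≤ π ((fun _ : Ω => a) + f) - a := by
    intro f hf a
    have hadd := hsub.1 _ (hmem f hf a) _ ((LSpan 𝒜).neg_mem hf)
    have he : ((fun _ : Ω => a) + f) + (-f) = fun _ : Ω => a := by funext ω; simp
    rw [he] at hadd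
    have := hpia a
    linarith
  have hbdd : ∀ f ∈ LSpan 𝒜, BddBelow (Set.range fun a : ℝ => π ((fun _ => a) + f) - a) := by
    intro f hf
    exact ⟨-π (-f), by rintro x ⟨a, rfl⟩; exact key f hf a⟩
  have hzero : π 0 = 0 := by
    have h := hsub.2 0 le_rfl 0 (LSpan 𝒜).zero_mem
    simpa using h
  -- `π̂(0) = 0`
  have hzeroHat : piHat π (0 : Ω → ℝ) = 0 := by
    unfold piHat
    apply le_antisymm
    · have h := ciInf_le (hbdd 0 (LSpan 𝒜).zero_mem) 0
      have e : ((fun _ : Ω => (0 : ℝ)) + (0 : Ω → ℝ)) = (0 : Ω → ℝ) := by funext ω; simp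
      rw [e, hzero, sub_zero] at h
      exact h
    · apply le_ciInf
      intro a
      have h := key 0 (LSpan 𝒜).zero_mem a
      simpa [hzero] using h
  -- monotone
  have hmonoHat : MonotoneOnL 𝒜 (piHat π) := by
    intro f hf g hg hle
    unfold piHat
    apply ciInf_mono (hbdd f hf)
    intro a
    have hle' : ((fun _ : Ω => a) + f) ≤ ((fun _ : Ω => a) + g) := by
      intro ω; exact add_le_add_right (hle ω) a
    exact sub_le_sub_right (hmono _ (hmem f hf a) _ (hmem g hg a) hle') a
  -- subadditive
  have hsubadd : ∀ f ∈ LSpan 𝒜, ∀ g ∈ LSpan 𝒜, piHat π (f + g) ≤ piHat π f + piHat π g := by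
    intro f hf g hg
    show piHat π (f + g) ≤ (⨅ a : ℝ, (π ((fun _ => a) + f) - a)) + ⨅ a : ℝ, (π ((fun _ => a) + g) - a)
    apply le_ciInf_add_ciInf
    intro a b
    have h := hsub.1 _ (hmem f hf a) _ (hmem g hg b)
    have he : ((fun _ : Ω => a) + f) + ((fun _ : Ω => b) + g)
        = (fun _ : Ω => (a + b)) + (f + g) := by
      funext ω; simp only [Pi.add_apply]; ring
    rw [he] at h
    calc piHat π (f + g) ≤ π ((fun _ : Ω => (a + b)) + (f + g)) - (a + b) :=
          ciInf_le (hbdd _ ((LSpan 𝒜).add_mem hf hg)) (a + b)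
      _ ≤ _ := by linarith
  -- positive homogeneity
  have hhom : ∀ c : ℝ, 0 ≤ c → ∀ f ∈ LSpan 𝒜, piHat π (c • f) = c * piHat π f := by
    intro c hc f hf
    rcases eq_or_lt_of_le hc with rfl | hc
    · rw [zero_smul, hzeroHat, zero_mul]
    · unfold piHat
      rw [Real.mul_iInf_of_nonneg hc.le]
      have hsurj : Function.Surjective (fun a : ℝ => c * a) := by
        intro b; exact ⟨b / c, by field_simp⟩
      have hterm : ∀ a : ℝ, π ((fun _ : Ω => c * a) + c • f) - c * a
          = c * (π ((fun _ : Ω => a) + f) - a) := by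
        intro a
        have he : ((fun _ : Ω => c * a) + c • f) = c • ((fun _ : Ω => a) + f) := by
          funext ω; simp [mul_add]
        rw [he, hsub.2 c hc.le _ (hmem f hf a)]
        ring
      calc (⨅ a : ℝ, (π ((fun _ : Ω => a) + c • f) - a))
          = ⨅ a : ℝ, (π ((fun _ : Ω => c * a) + c • f) - c * a) :=
            (ciInf_comp_surj' (G := fun x : ℝ => π ((fun _ : Ω => x) + c • f) - x) hsurj).symm
        _ = ⨅ a : ℝ, c * (π ((fun _ : Ω => a) + f) - a) := iInf_congr hterm
  -- additivity with respect to constants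
  have haddc : ∀ f ∈ LSpan 𝒜, ∀ c : ℝ, piHat π (f + fun _ => c) = piHat π f + c := by
    intro f hf c
    unfold piHat
    have hre : ∀ a : ℝ, ((fun _ : Ω => a) + (f + fun _ => c)) = (fun _ : Ω => (a + c)) + f := by
      intro a; funext ω; simp only [Pi.add_apply]; ring
    simp_rw [hre]
    have h1' : ∀ a : ℝ, π ((fun _ : Ω => a + c) + f) - a
        = (π ((fun _ : Ω => a + c) + f) - (a + c)) + c := by intro a; ring
    simp_rw [h1']
    exact ciInf_shift' (fun x : ℝ => π ((fun _ : Ω => x) + f) - x) (hbdd f hf) c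
  -- values on constants
  have hHat1 : piHat π (fun _ : Ω => (1 : ℝ)) = 1 := by
    have h := haddc 0 (LSpan 𝒜).zero_mem 1
    simpa [hzeroHat] using h
  have hHatneg1 : piHat π (fun _ : Ω => (-1 : ℝ)) = -1 := by
    have h := haddc 0 (LSpan 𝒜).zero_mem (-1)
    simpa [hzeroHat] using h
  -- `π̂ ≤ π`
  have hleπ : ∀ f ∈ LSpan 𝒜, piHat π f ≤ π f := by
    intro f hf
    have h := ciInf_le (hbdd f hf) 0
    have e : ((fun _ : Ω => (0 : ℝ)) + f) = f := by funext ω; simp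
    rw [e, sub_zero] at h
    exact h
  exact ⟨hbdd, hmonoHat, ⟨hsubadd, hhom⟩, haddc, hHat1, hHatneg1, hleπ⟩
end

section
/- Let 𝒩 ⊆ 𝒜. Then 𝒩 = 𝒩(m) for some finitely additive probability m on 𝒜 if and only if 𝒩 is a proper ideal of sets in 𝒜 and 𝒜 admits a representation 𝒜 = 𝒩 ∪ ⋃_{n∈ℕ} 𝓑ₙ with I_𝒩(𝓑ₙ) > 0 for every n, where I_𝒩(𝓑) = inf over nonempty finite sequences β of elements of 𝓑 and over N ∈ 𝒩 of sup_{ω ∈ Ω \ N} s(β)(ω). -/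
/-- `𝒩` is an ideal of sets inside the algebra `𝒜`. -/
def IsIdealIn {Ω : Type*} (𝒜 𝒩 : Set (Set Ω)) : Prop :=
  𝒩 ⊆ 𝒜 ∧ ∅ ∈ 𝒩 ∧ (∀ A ∈ 𝒩, ∀ B ∈ 𝒩, A ∪ B ∈ 𝒩) ∧
    ∀ A ∈ 𝒩, ∀ B ∈ 𝒜, B ⊆ A → B ∈ 𝒩

/-- `I_𝒩(𝓑) = inf over nonempty finite sequences β from 𝓑 and N ∈ 𝒩 of
`sup_{ω ∈ Ω \ N} s(β)(ω)`. -/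
noncomputable def interNumIdeal {Ω : Type*} (𝒩 𝓑 : Set (Set Ω)) : ℝ :=
  sInf {r | ∃ β : List (Set Ω), β ≠ [] ∧ (∀ B ∈ β, B ∈ 𝓑) ∧
    ∃ N ∈ 𝒩, r = sSup (sFun β '' Nᶜ)}

open Set Filter
open scoped lp ENNReal

theorem IsSetAlgebra.toMeasureTheory {Ω : Type*} {𝒜 : Set (Set Ω)} (h𝒜 : IsSetAlgebra 𝒜) :
    MeasureTheory.IsSetAlgebra 𝒜 :=
  ⟨h𝒜.1, h𝒜.2.2.1, fun _ _ hA hB => h𝒜.2.2.2 _ hA _ hB⟩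

theorem isSetAlgebra_univ {Ω : Type*} : IsSetAlgebra (univ : Set (Set Ω)) :=
  ⟨trivial, trivial, fun _ _ => trivial, fun _ _ _ _ => trivial⟩

section countMem

variable {Ω : Type*}

noncomputable def countMem (β : List (Set Ω)) (ω : Ω) : ℝ :=
  (β.map fun B => B.indicator (fun _ => (1 : ℝ)) ω).sum

@[simp]
theorem countMem_nil (ω : Ω) : countMem [] ω = 0 := rfl

@[simp]
theorem countMem_cons (B : Set Ω) (β : List (Set Ω)) (ω : Ω) :
    countMem (B :: β) ω = B.indicator (fun _ => 1) ω + countMem β ω := by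
  simp [countMem]

theorem sFun_eq_countMem_div (β : List (Set Ω)) (ω : Ω) :
    sFun β ω = countMem β ω / β.length := rfl

theorem countMem_nonneg (β : List (Set Ω)) (ω : Ω) : 0 ≤ countMem β ω :=
  List.sum_nonneg <| by
    simp only [List.mem_map]
    rintro _ ⟨B, -, rfl⟩
    exact indicator_nonneg (fun _ _ => zero_le_one) ω

theorem countMem_le_length (β : List (Set Ω)) (ω : Ω) : countMem β ω ≤ β.length := by
  have := List.sum_le_card_nsmul (β.map fun B => B.indicator (fun _ => (1 : ℝ)) ω) 1 <| by
    simp only [List.mem_map]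
    rintro _ ⟨B, -, rfl⟩
    exact indicator_le_self' (fun _ _ => zero_le_one) ω
  simpa [countMem] using this

theorem sFun_nonneg (β : List (Set Ω)) (ω : Ω) : 0 ≤ sFun β ω :=
  div_nonneg (countMem_nonneg β ω) (Nat.cast_nonneg _)

theorem sFun_le_one (β : List (Set Ω)) (ω : Ω) : sFun β ω ≤ 1 :=
  div_le_one_of_le₀ (countMem_le_length β ω) (Nat.cast_nonneg _)

end countMem

namespace IsFAProb

variable {Ω : Type*} {𝒜 𝒜' : Set (Set Ω)} {m : Set Ω → ℝ} {A B N : Set Ω}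

theorem anti (hm : IsFAProb 𝒜' m) (h : 𝒜 ⊆ 𝒜') : IsFAProb 𝒜 m :=
  ⟨fun A hA => hm.1 A (h hA), hm.2.1, fun A hA B hB => hm.2.2 A (h hA) B (h hB)⟩

theorem measure_empty (h𝒜 : IsSetAlgebra 𝒜) (hm : IsFAProb 𝒜 m) : m ∅ = 0 := by
  simpa using hm.2.2 ∅ h𝒜.1 ∅ h𝒜.1 (disjoint_empty _)

theorem measure_inter_add_diff (h𝒜 : IsSetAlgebra 𝒜) (hm : IsFAProb 𝒜 m) (hA : A ∈ 𝒜)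
    (hB : B ∈ 𝒜) : m (A ∩ B) + m (A \ B) = m A := by
  rw [← hm.2.2 _ (h𝒜.toMeasureTheory.inter_mem hA hB) _ (h𝒜.toMeasureTheory.sdiff_mem hA hB)
    (disjoint_sdiff_right.mono_left inter_subset_right), inter_union_sdiff]

theorem mono (h𝒜 : IsSetAlgebra 𝒜) (hm : IsFAProb 𝒜 m) (hA : A ∈ 𝒜) (hB : B ∈ 𝒜)
    (hAB : A ⊆ B) : m A ≤ m B := by
  have := hm.measure_inter_add_diff h𝒜 hB hA
  rw [inter_eq_right.mpr hAB] at this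
  linarith [hm.1 _ (h𝒜.toMeasureTheory.sdiff_mem hB hA)]

theorem le_one (h𝒜 : IsSetAlgebra 𝒜) (hm : IsFAProb 𝒜 m) (hA : A ∈ 𝒜) : m A ≤ 1 :=
  hm.2.1 ▸ hm.mono h𝒜 hA h𝒜.2.1 (subset_univ A)

theorem union_le (h𝒜 : IsSetAlgebra 𝒜) (hm : IsFAProb 𝒜 m) (hA : A ∈ 𝒜) (hB : B ∈ 𝒜) :
    m (A ∪ B) ≤ m A + m B := by
  have := hm.measure_inter_add_diff h𝒜 (h𝒜.2.2.2 A hA B hB) hA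
  rw [union_inter_cancel_left, union_sdiff_left] at this
  linarith [hm.mono h𝒜 (h𝒜.toMeasureTheory.sdiff_mem hB hA) hB sdiff_subset]

theorem measure_inter_compl_of_null (h𝒜 : IsSetAlgebra 𝒜) (hm : IsFAProb 𝒜 m) (hA : A ∈ 𝒜)
    (hN : N ∈ 𝒜) (hN0 : m N = 0) : m (A ∩ Nᶜ) = m A := by
  have := hm.measure_inter_add_diff h𝒜 hA (h𝒜.2.2.1 N hN)
  have hle := hm.mono h𝒜 (h𝒜.toMeasureTheory.sdiff_mem hA (h𝒜.2.2.1 N hN)) hN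
    (fun ω hω => by simpa using hω.2)
  linarith [hm.1 _ (h𝒜.toMeasureTheory.sdiff_mem hA (h𝒜.2.2.1 N hN))]

theorem measure_compl_of_null (h𝒜 : IsSetAlgebra 𝒜) (hm : IsFAProb 𝒜 m) (hN : N ∈ 𝒜)
    (hN0 : m N = 0) : m Nᶜ = 1 := by
  simpa [hm.2.1] using hm.measure_inter_compl_of_null h𝒜 h𝒜.2.1 hN hN0

theorem sum_measure_inter_le (h𝒜 : IsSetAlgebra 𝒜) (hm : IsFAProb 𝒜 m) {β : List (Set Ω)}
    (hβ : ∀ B ∈ β, B ∈ 𝒜) {D : Set Ω} (hD : D ∈ 𝒜) {k : ℝ}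
    (hk : ∀ ω ∈ D, countMem β ω ≤ k) : (β.map fun B => m (B ∩ D)).sum ≤ k * m D := by
  induction β generalizing D k with
  | nil =>
    rcases D.eq_empty_or_nonempty with rfl | ⟨ω, hω⟩
    · simp [hm.measure_empty h𝒜]
    · simpa using mul_nonneg (by simpa using hk ω hω) (hm.1 D hD)
  | cons B β ih =>
    have hB := hβ B List.mem_cons_self
    have hβ' : ∀ C ∈ β, C ∈ 𝒜 := fun C hC => hβ C (List.mem_cons_of_mem _ hC)
    have hDB := h𝒜.toMeasureTheory.inter_mem hD hB
    have hDB' := h𝒜.toMeasureTheory.sdiff_mem hD hB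
    -- Split `D` along `B`: inside `B` the remaining sets cover each point at most `k - 1` times
    have h_in := ih hβ' hDB (k := k - 1) fun ω hω => by
      have := hk ω hω.1
      rw [countMem_cons, indicator_of_mem hω.2] at this
      linarith
    have h_out := ih hβ' hDB' (k := k) fun ω hω => by
      simpa [indicator_of_notMem hω.2] using hk ω hω.1
    have h_split : ∀ C ∈ β, m (C ∩ D) = m (C ∩ (D ∩ B)) + m (C ∩ (D \ B)) := fun C hC => by
      rw [← hm.measure_inter_add_diff h𝒜 (h𝒜.toMeasureTheory.inter_mem (hβ' C hC) hD) hB,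
        inter_assoc, inter_sdiff_assoc]
    have hsum : (β.map fun C => m (C ∩ D)).sum =
        (β.map fun C => m (C ∩ (D ∩ B))).sum + (β.map fun C => m (C ∩ (D \ B))).sum := by
      rw [← List.sum_map_add]
      exact congrArg List.sum (List.map_congr_left h_split)
    have hD_split := hm.measure_inter_add_diff h𝒜 hD hB
    rw [List.map_cons, List.sum_cons, hsum, inter_comm B D, ← hD_split]
    linarith

theorem le_interNumIdeal (h𝒜 : IsSetAlgebra 𝒜) (hm : IsFAProb 𝒜 m) {𝓑 : Set (Set Ω)}
    (h𝓑 : 𝓑 ⊆ 𝒜) (hne : 𝓑.Nonempty) {ε : ℝ} (hε : ∀ B ∈ 𝓑, ε ≤ m B) :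
    ε ≤ interNumIdeal {A ∈ 𝒜 | m A = 0} 𝓑 := by
  obtain ⟨B₀, hB₀⟩ := hne
  refine le_csInf ⟨_, [B₀], by simp, by simpa using hB₀, ∅, ⟨h𝒜.1, hm.measure_empty h𝒜⟩, rfl⟩ ?_
  rintro _ ⟨β, hβne, hβ, N, ⟨hN, hN0⟩, rfl⟩
  set r := sSup (sFun β '' Nᶜ)
  have hlen : (0 : ℝ) < β.length := by exact_mod_cast List.length_pos_iff.mpr hβne
  have hcount : ∀ ω ∈ Nᶜ, countMem β ω ≤ r * β.length := fun ω hω => by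
    have : sFun β ω ≤ r :=
      le_csSup ⟨1, by rintro _ ⟨ω, -, rfl⟩; exact sFun_le_one β ω⟩ ⟨ω, hω, rfl⟩
    rwa [sFun_eq_countMem_div, div_le_iff₀ hlen] at this
  have hupper := hm.sum_measure_inter_le h𝒜 (fun B hB => h𝓑 (hβ B hB)) (h𝒜.2.2.1 N hN) hcount
  rw [hm.measure_compl_of_null h𝒜 hN hN0, mul_one,
    List.map_congr_left fun B hB => hm.measure_inter_compl_of_null h𝒜 (h𝓑 (hβ B hB)) hN hN0]
    at hupper
  have hlower : (β.map m).length • ε ≤ (β.map m).sum :=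
    List.card_nsmul_le_sum _ _ fun _ hx => by
      obtain ⟨B, hB, rfl⟩ := List.mem_map.mp hx
      exact hε B (hβ B hB)
  rw [List.length_map, nsmul_eq_mul] at hlower
  exact le_of_mul_le_mul_left ((hlower.trans hupper).trans_eq (mul_comm _ _)) hlen

theorem isIdealIn_nullSets (h𝒜 : IsSetAlgebra 𝒜) (hm : IsFAProb 𝒜 m) :
    IsIdealIn 𝒜 {A ∈ 𝒜 | m A = 0} := by
  refine ⟨sep_subset _ _, ⟨h𝒜.1, hm.measure_empty h𝒜⟩, ?_, ?_⟩
  · rintro A ⟨hA, hA0⟩ B ⟨hB, hB0⟩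
    have hAB := h𝒜.2.2.2 A hA B hB
    exact ⟨hAB, le_antisymm (by linarith [hm.union_le h𝒜 hA hB]) (hm.1 _ hAB)⟩
  · rintro A ⟨hA, hA0⟩ B hB hBA
    exact ⟨hB, le_antisymm (hA0 ▸ hm.mono h𝒜 hB hA hBA) (hm.1 B hB)⟩

theorem nullSets_union_iUnion_eq (hm : IsFAProb 𝒜 m) :
    𝒜 = {A ∈ 𝒜 | m A = 0} ∪ ⋃ n : ℕ, {A ∈ 𝒜 | 1 / (n + 1 : ℝ) ≤ m A} := by
  ext A
  simp only [mem_union, mem_iUnion, mem_ofPred_eq]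
  refine ⟨fun hA => ?_, by rintro (⟨hA, -⟩ | ⟨n, hA, -⟩) <;> exact hA⟩
  rcases (hm.1 A hA).eq_or_lt with h0 | hpos
  · exact Or.inl ⟨hA, h0.symm⟩
  · obtain ⟨n, hn⟩ := exists_nat_one_div_lt hpos
    exact Or.inr ⟨n, hA, hn.le⟩

end IsFAProb

section interNumIdeal

variable {Ω : Type*} {𝒩 𝓑 : Set (Set Ω)}

theorem interNumIdeal_nonneg : 0 ≤ interNumIdeal 𝒩 𝓑 :=
  Real.sInf_nonneg <| by
    rintro _ ⟨β, -, -, N, -, rfl⟩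
    exact Real.sSup_nonneg <| by rintro _ ⟨ω, -, rfl⟩; exact sFun_nonneg β ω

theorem interNumIdeal_le {β : List (Set Ω)} (hβne : β ≠ []) (hβ : ∀ B ∈ β, B ∈ 𝓑) {N : Set Ω}
    (hN : N ∈ 𝒩) : interNumIdeal 𝒩 𝓑 ≤ sSup (sFun β '' Nᶜ) := by
  refine csInf_le ⟨0, ?_⟩ ⟨β, hβne, hβ, N, hN, rfl⟩
  rintro _ ⟨β, -, -, N, -, rfl⟩
  exact Real.sSup_nonneg <| by rintro _ ⟨ω, -, rfl⟩; exact sFun_nonneg β ω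

theorem interNumIdeal_mul_length_le (hU : univ ∉ 𝒩) {β : List (Set Ω)} (hβ : ∀ B ∈ β, B ∈ 𝓑)
    {N : Set Ω} (hN : N ∈ 𝒩) {a : ℝ} (ha : ∀ ω ∉ N, countMem β ω ≤ a) :
    interNumIdeal 𝒩 𝓑 * β.length ≤ a := by
  obtain ⟨ω₀, hω₀⟩ := ne_univ_iff_exists_notMem N |>.mp (ne_of_mem_of_not_mem hN hU)
  rcases eq_or_ne β [] with rfl | hβne
  · simpa using ha ω₀ hω₀
  have hlen : (0 : ℝ) < β.length := by exact_mod_cast List.length_pos_iff.mpr hβne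
  have hsup : sSup (sFun β '' Nᶜ) ≤ a / β.length := by
    refine csSup_le ⟨_, ω₀, hω₀, rfl⟩ ?_
    rintro _ ⟨ω, hω, rfl⟩
    exact div_le_div_of_nonneg_right (ha ω hω) hlen.le
  rw [← le_div_iff₀ hlen]
  exact (interNumIdeal_le hβne hβ hN).trans hsup

theorem interNumIdeal_mul_sum_le (hU : univ ∉ 𝒩) {ι : Type*} [Fintype ι] {B : ι → Set Ω}
    (hB : ∀ i, B i ∈ 𝓑) {c : ι → ℝ} (hc : ∀ i, 0 ≤ c i) {N : Set Ω} (hN : N ∈ 𝒩) {a : ℝ}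
    (ha : ∀ ω ∉ N, ∑ i, c i * (B i).indicator (fun _ => 1) ω ≤ a) :
    interNumIdeal 𝒩 𝓑 * ∑ i, c i ≤ a := by
  -- Round the weights up to multiples of `1 / k` and repeat each `B i` accordingly.
  have h_approx : ∀ k : ℕ, 0 < k → interNumIdeal 𝒩 𝓑 * ∑ i, c i ≤ a + Fintype.card ι / k := by
    intro k hk
    have hk' : (0 : ℝ) < k := by exact_mod_cast hk
    set β := Finset.univ.toList.flatMap fun i => List.replicate ⌈k * c i⌉₊ (B i)
    have hβ : ∀ C ∈ β, C ∈ 𝓑 := fun C hC => by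
      obtain ⟨i, -, hi⟩ := List.mem_flatMap.mp hC
      exact (List.mem_replicate.mp hi).2 ▸ hB i
    have hcount : ∀ ω ∉ N, countMem β ω ≤ k * a + Fintype.card ι := fun ω hω => by
      have hterm : ∀ i, (⌈k * c i⌉₊ : ℝ) * (B i).indicator (fun _ => 1) ω ≤
          k * (c i * (B i).indicator (fun _ => 1) ω) + 1 := fun i => by
        have h0 : 0 ≤ (B i).indicator (fun _ => (1 : ℝ)) ω :=
          indicator_nonneg (fun _ _ => zero_le_one) ω
        have h1 : (B i).indicator (fun _ => (1 : ℝ)) ω ≤ 1 :=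
          indicator_le_self' (fun _ _ => zero_le_one) ω
        have := Nat.ceil_lt_add_one (mul_nonneg hk'.le (hc i))
        nlinarith
      calc countMem β ω = ∑ i, (⌈k * c i⌉₊ : ℝ) * (B i).indicator (fun _ => 1) ω := by
            simp [β, countMem, List.flatMap]
        _ ≤ ∑ i, (k * (c i * (B i).indicator (fun _ => 1) ω) + 1) :=
            Finset.sum_le_sum fun i _ => hterm i
        _ = k * ∑ i, c i * (B i).indicator (fun _ => 1) ω + Fintype.card ι := by
            simp [Finset.sum_add_distrib, Finset.mul_sum]
        _ ≤ k * a + Fintype.card ι := by gcongr; exact ha ω hω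
    have hlen : k * ∑ i, c i ≤ β.length := by
      simp only [β, List.length_flatMap, List.length_replicate, Finset.sum_map_toList,
        Nat.cast_sum, Finset.mul_sum]
      exact Finset.sum_le_sum fun i _ => Nat.le_ceil _
    have hI : 0 ≤ interNumIdeal 𝒩 𝓑 := interNumIdeal_nonneg
    have hmain := interNumIdeal_mul_length_le hU hβ hN hcount
    refine le_of_mul_le_mul_left ?_ hk'
    rw [mul_add, mul_div_cancel₀ _ hk'.ne']
    nlinarith [mul_le_mul_of_nonneg_left hlen hI]
  refine ge_of_tendsto ?_ (eventually_gt_atTop 0 |>.mono h_approx)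
  simpa using (tendsto_const_div_atTop_nhds_zero_nat (Fintype.card ι : ℝ)).const_add a

end interNumIdeal

section boundedFunctions

variable {Ω : Type*}

noncomputable def lpIndicator (A : Set Ω) : ℓ^∞(Ω, ℝ) :=
  ⟨A.indicator fun _ => 1, memℓp_infty ⟨1, by
    rintro _ ⟨ω, rfl⟩
    by_cases hω : ω ∈ A <;> simp [hω]⟩⟩

@[simp]
theorem coe_lpIndicator (A : Set Ω) : ⇑(lpIndicator A) = A.indicator fun _ => 1 := rfl

theorem lpIndicator_univ : lpIndicator (univ : Set Ω) = 1 :=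
  lp.ext <| by simp [lp.infty_coeFn_one]; rfl

theorem lpIndicator_union {A B : Set Ω} (h : Disjoint A B) :
    lpIndicator (A ∪ B) = lpIndicator A + lpIndicator B :=
  lp.ext <| by rw [lp.coeFn_add]; exact indicator_union_of_disjoint h _

variable (𝒩 𝓑 : Set (Set Ω))

noncomputable def excessCone : PointedCone ℝ ℓ^∞(Ω, ℝ) :=
  PointedCone.hull ℝ ((fun B => lpIndicator B - interNumIdeal 𝒩 𝓑 • 1) '' 𝓑)

noncomputable def majorantCone : PointedCone ℝ ℓ^∞(Ω, ℝ) :=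
  PointedCone.hull ℝ (excessCone 𝒩 𝓑 ∪ {f | ∃ N ∈ 𝒩, ∀ ω ∉ N, 0 ≤ f ω})

variable {𝒩 𝓑}

theorem nonneg_of_mem_excessCone_of_le (hU : univ ∉ 𝒩) {h : ℓ^∞(Ω, ℝ)}
    (hh : h ∈ excessCone 𝒩 𝓑) {N : Set Ω} (hN : N ∈ 𝒩) {t : ℝ} (ht : ∀ ω ∉ N, h ω ≤ t) :
    0 ≤ t := by
  obtain ⟨T, hT, c, rfl⟩ := (Submodule.mem_span_image_iff_exists_fun _).mp hh
  have heval : ∀ ω, (∑ i, c i • (lpIndicator (i : Set Ω) - interNumIdeal 𝒩 𝓑 • 1)) ω =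
      ∑ i, (c i : ℝ) * (i : Set Ω).indicator (fun _ => 1) ω -
        interNumIdeal 𝒩 𝓑 * ∑ i, (c i : ℝ) := fun ω => by
    simp only [← Nonneg.coe_smul, lp.coeFn_sum, Finset.sum_apply, lp.coeFn_smul, lp.coeFn_sub,
      coe_lpIndicator, lp.infty_coeFn_one, Pi.smul_apply, Pi.sub_apply, Pi.one_apply, smul_eq_mul,
      mul_sub, Finset.sum_sub_distrib, Finset.mul_sum, mul_one, mul_comm]
  have := interNumIdeal_mul_sum_le hU (fun i => hT i.2) (fun i => (c i).2) hN
    (a := t + interNumIdeal 𝒩 𝓑 * ∑ i, (c i : ℝ)) fun ω hω => by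
      linarith [heval ω ▸ ht ω hω]
  linarith

theorem exists_le_of_mem_majorantCone (hempty : ∅ ∈ 𝒩) (hunion : ∀ A ∈ 𝒩, ∀ B ∈ 𝒩, A ∪ B ∈ 𝒩)
    {f : ℓ^∞(Ω, ℝ)} (hf : f ∈ majorantCone 𝒩 𝓑) :
    ∃ h ∈ excessCone 𝒩 𝓑, ∃ N ∈ 𝒩, ∀ ω ∉ N, h ω ≤ f ω := by
  induction hf using Submodule.span_induction with
  | mem f hf =>
    rcases hf with hf | ⟨N, hN, hfN⟩
    · exact ⟨f, hf, ∅, hempty, fun _ _ => le_rfl⟩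
    · exact ⟨0, zero_mem _, N, hN, fun ω hω => by simpa using hfN ω hω⟩
  | zero => exact ⟨0, zero_mem _, ∅, hempty, fun _ _ => le_rfl⟩
  | add f g _ _ hf hg =>
    obtain ⟨h₁, hh₁, N₁, hN₁, hf⟩ := hf
    obtain ⟨h₂, hh₂, N₂, hN₂, hg⟩ := hg
    refine ⟨h₁ + h₂, add_mem hh₁ hh₂, N₁ ∪ N₂, hunion _ hN₁ _ hN₂, fun ω hω => ?_⟩
    simp only [mem_union, not_or] at hω
    simpa only [lp.coeFn_add, Pi.add_apply] using add_le_add (hf ω hω.1) (hg ω hω.2)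
  | smul c f _ hf =>
    obtain ⟨h, hh, N, hN, hf⟩ := hf
    refine ⟨c • h, Submodule.smul_mem _ c hh, N, hN, fun ω hω => ?_⟩
    simpa only [← Nonneg.coe_smul, lp.coeFn_smul, Pi.smul_apply, smul_eq_mul] using
      mul_le_mul_of_nonneg_left (hf ω hω) c.2

theorem nonneg_of_smul_one_mem_majorantCone (hempty : ∅ ∈ 𝒩)
    (hunion : ∀ A ∈ 𝒩, ∀ B ∈ 𝒩, A ∪ B ∈ 𝒩) (hU : univ ∉ 𝒩) {t : ℝ}
    (ht : t • (1 : ℓ^∞(Ω, ℝ)) ∈ majorantCone 𝒩 𝓑) : 0 ≤ t := by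
  obtain ⟨h, hh, N, hN, hle⟩ := exists_le_of_mem_majorantCone hempty hunion ht
  exact nonneg_of_mem_excessCone_of_le hU hh hN fun ω hω => by
    simpa [lp.coeFn_smul, lp.infty_coeFn_one] using hle ω hω

theorem exists_linearMap_nonneg_on_majorantCone (hempty : ∅ ∈ 𝒩)
    (hunion : ∀ A ∈ 𝒩, ∀ B ∈ 𝒩, A ∪ B ∈ 𝒩) (hU : univ ∉ 𝒩) :
    ∃ g : ℓ^∞(Ω, ℝ) →ₗ[ℝ] ℝ, g 1 = 1 ∧ ∀ f ∈ majorantCone 𝒩 𝓑, 0 ≤ g f := by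
  have hne : (1 : ℓ^∞(Ω, ℝ)) ≠ 0 := by
    obtain ⟨ω, -⟩ := ne_univ_iff_exists_notMem ∅ |>.mp (ne_of_mem_of_not_mem hempty hU)
    intro h
    simpa [lp.infty_coeFn_one] using congrFun (congrArg (⇑) h) ω
  set f := LinearPMap.mkSpanSingleton (σ := RingHom.id ℝ) (1 : ℓ^∞(Ω, ℝ)) (1 : ℝ) hne
  have hf_nonneg : ∀ x : f.domain, (x : ℓ^∞(Ω, ℝ)) ∈ majorantCone 𝒩 𝓑 → 0 ≤ f x := by
    rintro ⟨x, hx⟩ hxs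
    obtain ⟨t, rfl⟩ := Submodule.mem_span_singleton.mp hx
    rw [LinearPMap.mkSpanSingleton'_apply]
    simpa using nonneg_of_smul_one_mem_majorantCone hempty hunion hU hxs
  -- Every bounded `y` is pushed into the cone by adding the constant `‖y‖`
  have hf_dense : ∀ y, ∃ x : f.domain, (x : ℓ^∞(Ω, ℝ)) + y ∈ majorantCone 𝒩 𝓑 := by
    intro y
    refine ⟨⟨‖y‖ • 1, Submodule.smul_mem _ _ (Submodule.mem_span_singleton_self 1)⟩,
      Submodule.subset_span (Or.inr ⟨∅, hempty, fun ω _ => ?_⟩)⟩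
    have := lp.norm_apply_le_norm ENNReal.top_ne_zero y ω
    simp only [lp.coeFn_add, lp.coeFn_smul, lp.infty_coeFn_one, Pi.add_apply, Pi.smul_apply,
      Pi.one_apply, smul_eq_mul, mul_one]
    linarith [neg_abs_le (y ω), Real.norm_eq_abs (y ω)]
  obtain ⟨g, hgf, hg⟩ := riesz_extension (majorantCone 𝒩 𝓑) f hf_nonneg hf_dense
  exact ⟨g, (hgf _).trans (LinearPMap.mkSpanSingleton_apply ℝ ℝ hne 1), hg⟩

end boundedFunctions

section mixture

variable {Ω : Type*} {𝒜 : Set (Set Ω)} {μ : ℕ → Set Ω → ℝ} {w : ℕ → ℝ}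

theorem summable_mul_measure (h𝒜 : IsSetAlgebra 𝒜) (hμ : ∀ n, IsFAProb 𝒜 (μ n))
    (hw : ∀ n, 0 ≤ w n) (hw1 : HasSum w 1) {A : Set Ω} (hA : A ∈ 𝒜) :
    Summable fun n => w n * μ n A :=
  hw1.summable.of_nonneg_of_le (fun n => mul_nonneg (hw n) ((hμ n).1 A hA))
    fun n => mul_le_of_le_one_right (hw n) ((hμ n).le_one h𝒜 hA)

theorem isFAProb_tsum_mul (h𝒜 : IsSetAlgebra 𝒜) (hμ : ∀ n, IsFAProb 𝒜 (μ n))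
    (hw : ∀ n, 0 ≤ w n) (hw1 : HasSum w 1) : IsFAProb 𝒜 fun A => ∑' n, w n * μ n A := by
  refine ⟨fun A hA => tsum_nonneg fun n => mul_nonneg (hw n) ((hμ n).1 A hA), ?_,
    fun A hA B hB hAB => ?_⟩
  · simpa [(hμ _).2.1] using hw1.tsum_eq
  · simp only [(hμ _).2.2 A hA B hB hAB, mul_add]
    exact (summable_mul_measure h𝒜 hμ hw hw1 hA).tsum_add
      (summable_mul_measure h𝒜 hμ hw hw1 hB)

theorem tsum_mul_measure_eq_zero_iff (h𝒜 : IsSetAlgebra 𝒜) (hμ : ∀ n, IsFAProb 𝒜 (μ n))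
    (hw : ∀ n, 0 < w n) (hw1 : HasSum w 1) {A : Set Ω} (hA : A ∈ 𝒜) :
    ∑' n, w n * μ n A = 0 ↔ ∀ n, μ n A = 0 := by
  rw [← (summable_mul_measure h𝒜 hμ (fun n => (hw n).le) hw1 hA).hasSum_iff,
    hasSum_zero_iff_of_nonneg fun n => mul_nonneg (hw n).le ((hμ n).1 A hA), funext_iff]
  exact forall_congr' fun n => by simp [(hw n).ne']

end mixture

section backward

variable {Ω : Type*} {𝒩 : Set (Set Ω)}

theorem exists_isFAProb_null_interNumIdeal_le (hempty : ∅ ∈ 𝒩)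
    (hunion : ∀ A ∈ 𝒩, ∀ B ∈ 𝒩, A ∪ B ∈ 𝒩) (hU : univ ∉ 𝒩) (𝓑 : Set (Set Ω)) :
    ∃ μ : Set Ω → ℝ, IsFAProb univ μ ∧ (∀ N ∈ 𝒩, μ N = 0) ∧
      ∀ B ∈ 𝓑, interNumIdeal 𝒩 𝓑 ≤ μ B := by
  obtain ⟨g, hg1, hg⟩ := exists_linearMap_nonneg_on_majorantCone (𝓑 := 𝓑) hempty hunion hU
  have hg_ae : ∀ f : ℓ^∞(Ω, ℝ), ∀ N ∈ 𝒩, (∀ ω ∉ N, 0 ≤ f ω) → 0 ≤ g f := fun f N hN hf =>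
    hg f (Submodule.subset_span (Or.inr ⟨N, hN, hf⟩))
  have hnonneg : ∀ A, 0 ≤ g (lpIndicator A) := fun A =>
    hg_ae _ ∅ hempty fun ω _ => indicator_nonneg (fun _ _ => zero_le_one) ω
  refine ⟨fun A => g (lpIndicator A), ⟨fun A _ => hnonneg A, ?_, fun A _ B _ hAB => ?_⟩,
    fun N hN => ?_, fun B hB => ?_⟩
  · exact (congrArg g lpIndicator_univ).trans hg1
  · exact (congrArg g (lpIndicator_union hAB)).trans (map_add g _ _)
  · have := hg_ae (-lpIndicator N) N hN fun ω hω => by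
      show (0 : ℝ) ≤ -N.indicator (fun _ => 1) ω
      simp [indicator_of_notMem hω]
    rw [map_neg] at this
    linarith [hnonneg N]
  · have := hg _ (Submodule.subset_span (Or.inl (Submodule.subset_span ⟨B, hB, rfl⟩)))
    rwa [map_sub, map_smul, hg1, smul_eq_mul, mul_one, sub_nonneg] at this

theorem exists_isFAProb_nullSets_eq {𝒜 : Set (Set Ω)} (h𝒩 : IsIdealIn 𝒜 𝒩) (hU : univ ∉ 𝒩)
    {𝓑 : ℕ → Set (Set Ω)} (hpos : ∀ n, 0 < interNumIdeal 𝒩 (𝓑 n))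
    (hcover : 𝒜 = 𝒩 ∪ ⋃ n, 𝓑 n) :
    ∃ m : Set Ω → ℝ, IsFAProb 𝒜 m ∧ 𝒩 = {A ∈ 𝒜 | m A = 0} := by
  choose μ hμ hμ_null hμ_pos using fun n =>
    exists_isFAProb_null_interNumIdeal_le h𝒩.2.1 h𝒩.2.2.1 hU (𝓑 n)
  set m : Set Ω → ℝ := fun A => ∑' n : ℕ, 1 / 2 / 2 ^ n * μ n A
  have hw : ∀ n : ℕ, (0 : ℝ) < 1 / 2 / 2 ^ n := fun n => by positivity
  have hm_zero : ∀ A, m A = 0 ↔ ∀ n, μ n A = 0 := fun A =>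
    tsum_mul_measure_eq_zero_iff isSetAlgebra_univ hμ hw (hasSum_geometric_two' 1) (mem_univ A)
  refine ⟨m, (isFAProb_tsum_mul isSetAlgebra_univ hμ (fun n => (hw n).le)
    (hasSum_geometric_two' 1)).anti (subset_univ 𝒜), ?_⟩
  ext A
  refine ⟨fun hA => ⟨h𝒩.1 hA, (hm_zero A).mpr fun n => hμ_null n A hA⟩, fun ⟨hA, hA0⟩ => ?_⟩
  rcases hcover ▸ hA with hA | hA
  · exact hA
  · obtain ⟨n, hn⟩ := mem_iUnion.mp hA
    exact absurd ((hm_zero A).mp hA0 n) ((hpos n).trans_le (hμ_pos n A hn)).ne'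

end backward

theorem null_ideal_characterization_general {Ω : Type*} (𝒜 𝒩 : Set (Set Ω))
    (h𝒜 : IsSetAlgebra 𝒜) :
    (∃ m : Set Ω → ℝ, IsFAProb 𝒜 m ∧ 𝒩 = {A ∈ 𝒜 | m A = 0}) ↔
      (IsIdealIn 𝒜 𝒩 ∧ Set.univ ∉ 𝒩 ∧
        ∃ 𝓑 : ℕ → Set (Set Ω), (∀ n, 𝓑 n ⊆ 𝒜) ∧ (∀ n, 0 < interNumIdeal 𝒩 (𝓑 n)) ∧
          𝒜 = 𝒩 ∪ ⋃ n, 𝓑 n) := by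
  constructor
  · rintro ⟨m, hm, rfl⟩
    refine ⟨hm.isIdealIn_nullSets h𝒜, fun h => one_ne_zero (hm.2.1 ▸ h.2),
      fun n => {A ∈ 𝒜 | 1 / (n + 1 : ℝ) ≤ m A}, fun n => sep_subset _ _, fun n => ?_,
      hm.nullSets_union_iUnion_eq⟩
    have hunivB : univ ∈ {A ∈ 𝒜 | 1 / (n + 1 : ℝ) ≤ m A} := by
      refine ⟨h𝒜.2.1, ?_⟩
      rw [hm.2.1]
      exact div_le_one_of_le₀ (le_add_of_nonneg_left n.cast_nonneg) (by positivity)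
    exact (by positivity : (0 : ℝ) < 1 / (n + 1)).trans_le
      (hm.le_interNumIdeal h𝒜 (sep_subset _ _) ⟨univ, hunivB⟩ fun B hB => hB.2)
  · rintro ⟨h𝒩, hU, 𝓑, -, hpos, hcover⟩
    exact exists_isFAProb_nullSets_eq h𝒩 hU hpos hcover

/-- A family `𝒩 ⊆ 𝒜` is the family of null sets of some finitely additive
probability on `𝒜` iff it is a proper ideal and `𝒜 = 𝒩 ∪ ⋃ₙ 𝓑ₙ` with every
`I_𝒩(𝓑ₙ) > 0`. -/
theorem null_ideal_characterization {Ω : Type*} [Nonempty Ω] (𝒜 𝒩 : Set (Set Ω))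
    (h𝒜 : IsSetAlgebra 𝒜) (h𝒩𝒜 : 𝒩 ⊆ 𝒜) :
    (∃ m : Set Ω → ℝ, IsFAProb 𝒜 m ∧ 𝒩 = {A ∈ 𝒜 | m A = 0}) ↔
      (IsIdealIn 𝒜 𝒩 ∧ Set.univ ∉ 𝒩 ∧
        ∃ 𝓑 : ℕ → Set (Set Ω), (∀ n, 𝓑 n ⊆ 𝒜) ∧ (∀ n, 0 < interNumIdeal 𝒩 (𝓑 n)) ∧
          𝒜 = 𝒩 ∪ ⋃ n, 𝓑 n) :=
  null_ideal_characterization_general 𝒜 𝒩 h𝒜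
end

section
/- Let ≥_* be a preorder on ℝ^Ω satisfying conditions (i)–(v). If f ≥_* 0 and t > 0, then {ω : f(ω) < −t} ∈ 𝒩_*, i.e. 0 ≥_* 1_{{f < −t}}. -/
/-- A finitely additive probability on the algebra of all subsets of `Ω`. -/
def IsFAProbAll {Ω : Type*} (m : Set Ω → ℝ) : Prop :=
  (∀ A : Set Ω, 0 ≤ m A) ∧ m Set.univ = 1 ∧
    ∀ A B : Set Ω, Disjoint A B → m (A ∪ B) = m A + m B

/-- `f ≥ g` `m`-almost surely: `inf_{t > 0} m({f - g < -t}) = 0`. -/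
def AlmostGE {Ω : Type*} (m : Set Ω → ℝ) (f g : Ω → ℝ) : Prop :=
  sInf {r | ∃ t : ℝ, 0 < t ∧ r = m {ω | f ω - g ω < -t}} = 0

/-- `𝒩_* = {A ⊆ Ω : 0 ≥_* 1_A}`, the null sets of the ranking `R` (where `R f g`
stands for `f ≥_* g`). -/
def NstarSet {Ω : Type*} (R : (Ω → ℝ) → (Ω → ℝ) → Prop) : Set (Set Ω) :=
  {A : Set Ω | R 0 (A.indicator fun _ => (1 : ℝ))}

/-- Conditions (i)–(v) on the ranking `R` (where `R f g` stands for `f ≥_* g`):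
(i) not `0 >_* 1`; (ii) `f ≥_* 0` and `a > 0` imply `f ⊓ a ≥_* 0`;
(iii) `f ≥ 0` pointwise implies `f ≥_* 0`; (iv) `f ≥_* g` implies
`b·f + h ≥_* b·g + h` for every bounded pointwise-positive `b` and every `h`;
(v) if `f + ε ≥_* 0` for all `ε > 0` then `f ≥_* 0`. -/
def StarConds {Ω : Type*} (R : (Ω → ℝ) → (Ω → ℝ) → Prop) : Prop :=
  (¬ (R 0 1 ∧ ¬ R 1 0)) ∧
    (∀ f : Ω → ℝ, ∀ a : ℝ, R f 0 → 0 < a → R (fun ω => min (f ω) a) 0) ∧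
    (∀ f : Ω → ℝ, 0 ≤ f → R f 0) ∧
    (∀ f g b h : Ω → ℝ, R f g → (∀ ω, 0 < b ω) → (∃ C : ℝ, ∀ ω, b ω ≤ C) →
      R (b * f + h) (b * g + h)) ∧
    (∀ f : Ω → ℝ, (∀ ε : ℝ, 0 < ε → R (f + fun _ => ε) 0) → R f 0)

/-! Rescaling by `t⁻¹` and truncating at `ε` gives `g := min (f / t) ε ≥_* 0` with
`g ≤ ε - 1_{f < -t}` pointwise. By monotonicity `ε - 1_{f < -t} ≥_* 0` for every `ε > 0`,
so `-1_{f < -t} ≥_* 0` by (v), and translating by `1_{f < -t}` gives `0 ≥_* 1_{f < -t}`. -/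

theorem min_div_le_sub_indicator {Ω : Type*} {f : Ω → ℝ} {t ε : ℝ} (ht : 0 < t) (hε : 0 ≤ ε) :
    (fun ω => min (f ω / t) ε) ≤ fun ω => ε - {ω | f ω < -t}.indicator (fun _ => 1) ω := by
  intro ω
  by_cases hω : f ω < -t
  · have : f ω / t < -1 := by rw [div_lt_iff₀ ht]; linarith
    simp only [Set.indicator_of_mem (show ω ∈ {ω | f ω < -t} from hω)]
    linarith [min_le_left (f ω / t) ε]
  · simp only [Set.indicator_of_notMem (show ω ∉ {ω | f ω < -t} from hω)]
    linarith [min_le_right (f ω / t) ε]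

namespace StarConds

variable {Ω : Type*} {R : (Ω → ℝ) → (Ω → ℝ) → Prop}

theorem add_right (hR : StarConds R) {f g : Ω → ℝ} (h : R f g) (k : Ω → ℝ) :
    R (f + k) (g + k) := by
  simpa using hR.2.2.2.1 f g 1 k h (fun _ => one_pos) ⟨1, fun _ => le_rfl⟩

theorem smul (hR : StarConds R) {f g : Ω → ℝ} (h : R f g) {c : ℝ} (hc : 0 < c) :
    R (c • f) (c • g) := by
  convert hR.2.2.2.1 f g (fun _ => c) 0 h (fun _ => hc) ⟨c, fun _ => le_rfl⟩ using 1 <;>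
    ext <;> simp

theorem of_le (hR : StarConds R) {f g : Ω → ℝ} (hgf : g ≤ f) : R f g := by
  have h : R (f - g) 0 := hR.2.2.1 _ (sub_nonneg.mpr hgf)
  simpa using hR.add_right h g

theorem zero_of_neg (hR : StarConds R) {f : Ω → ℝ} (h : R (-f) 0) : R 0 f := by
  simpa using hR.add_right h f

end StarConds

theorem sublevel_null_general {Ω : Type*} (R : (Ω → ℝ) → (Ω → ℝ) → Prop)
    (htrans : Transitive R) (hc : StarConds R)
    (f : Ω → ℝ) (t : ℝ) (hf : R f 0) (ht : 0 < t) :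
    {ω | f ω < -t} ∈ NstarSet R := by
  have hscaled : R (fun ω => f ω / t) 0 := by
    convert hc.smul hf (inv_pos.mpr ht) using 1 <;> ext <;> simp [div_eq_inv_mul]
  refine hc.zero_of_neg (hc.2.2.2.2 _ fun ε hε => ?_)
  have htrunc : R (fun ω => min (f ω / t) ε) 0 := hc.2.1 _ ε hscaled hε
  convert htrans (hc.of_le (min_div_le_sub_indicator ht hε.le)) htrunc using 1
  ext ω
  simp only [Pi.add_apply, Pi.neg_apply]
  ring

/-- If `≥_*` satisfies (i)–(v), `f ≥_* 0` and `t > 0`, then `{f < -t} ∈ 𝒩_*`. -/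
theorem sublevel_null {Ω : Type*} [Nonempty Ω] (R : (Ω → ℝ) → (Ω → ℝ) → Prop)
    (hrefl : Reflexive R) (htrans : Transitive R) (hc : StarConds R)
    (f : Ω → ℝ) (t : ℝ) (hf : R f 0) (ht : 0 < t) :
    {ω | f ω < -t} ∈ NstarSet R :=
  sublevel_null_general R htrans hc f t hf ht
end
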